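/- arXiv:1711.08625 — 8 statements merged into one kernel-verified Lean document; each statement's English description precedes it below -/
import Mathlib

section
/- Let n ≥ 3 be an integer and M a finite group of order 3·2^n such that every normal subgroup of M of odd order is trivial and a Sylow 2-subgroup P of M is not normal in M (equivalently, M has 2-length 2 and O_{2'}(M) = 1). Let G = Park(M,P) be Park's group and ι : M → G Park's embedding, and let k be an algebraically closed field of characteristic 2. Then for every subgroup Q of P, the permutation k-module on the left coset space (ι(Q)·C_G(ι(Q))) / (ι(Q)·C_{ι(M)}(ι(Q))) is an indecomposable module for the group ι(Q)·C_G(ι(Q)). -/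
/-- A module is indecomposable if it is nonzero and is not the direct sum of
two nonzero submodules. -/
def IsIndecomposableModule (R : Type*) (M : Type*) [Semiring R] [AddCommMonoid M]
    [Module R M] : Prop :=
  Nontrivial M ∧ ∀ U W : Submodule R M, IsCompl U W → U = ⊥ ∨ W = ⊥

/-- The permutation `kG`-module `k[X]` on a `G`-set `X`, as a module over the
group algebra `MonoidAlgebra k G`. -/
abbrev PermutationModule (k G X : Type*) [CommSemiring k] [Monoid G] [MulAction G X] :=
  (Representation.ofMulAction k G X).asModule

/-- Park's group `Park(M, P)`: the group of bijections of `M` commuting with the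
right multiplication action of `P`. -/
def parkGroup (M : Type*) [Group M] (P : Subgroup M) : Subgroup (Equiv.Perm M) where
  carrier := {f : Equiv.Perm M | ∀ (m u : M), u ∈ P → f (m * u) = f m * u}
  one_mem' := by intro m u _; rfl
  mul_mem' := by
    intro f g hf hg m u hu
    simp only [Equiv.Perm.mul_apply]
    rw [hg m u hu, hf _ u hu]
  inv_mem' := by
    intro f hf m u hu
    apply f.injective
    rw [Equiv.Perm.coe_inv, Equiv.apply_symm_apply, hf _ u hu, Equiv.apply_symm_apply]

/-- Park's embedding of `M` into `Park(M, P)`, sending `m` to left translation by `m`. -/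
def parkEmbed (M : Type*) [Group M] (P : Subgroup M) : M →* ↥(parkGroup M P) where
  toFun m := ⟨Equiv.mulLeft m, fun x u _ => by simp [mul_assoc]⟩
  map_one' := by
    apply Subtype.ext
    ext x
    simp
  map_mul' m n := by
    apply Subtype.ext
    ext x
    simp [mul_assoc]

/-- The subgroup `ι(Q)·C_G(ι(Q))` of Park's group `G = Park(M, P)`; since `ι(Q)`
normalizes the centralizer `C_G(ι(Q))`, this product of subgroups is their join. -/
def qcG (M : Type*) [Group M] (P Q : Subgroup M) : Subgroup ↥(parkGroup M P) :=
  Q.map (parkEmbed M P) ⊔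
    Subgroup.centralizer (Q.map (parkEmbed M P) : Set ↥(parkGroup M P))

/-- The subgroup `ι(Q)·C_{ι(M)}(ι(Q))` of Park's group `G = Park(M, P)`, where
`C_{ι(M)}(ι(Q)) = ι(M) ⊓ C_G(ι(Q))`; again the product is the join. -/
def qcM (M : Type*) [Group M] (P Q : Subgroup M) : Subgroup ↥(parkGroup M P) :=
  Q.map (parkEmbed M P) ⊔
    ((parkEmbed M P).range ⊓
      Subgroup.centralizer (Q.map (parkEmbed M P) : Set ↥(parkGroup M P)))

/-- `P` is a Sylow `p`-subgroup of a subgroup `H` of `G`. -/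
def IsSylowIn (p : ℕ) {G : Type*} [Group G] (H P : Subgroup G) : Prop :=
  P ≤ H ∧ IsPGroup p P ∧ ∀ Q : Subgroup G, Q ≤ H → IsPGroup p Q → P ≤ Q → Q = P

/-!
A permutation module `k[X]` over a field of characteristic `p` is indecomposable as soon as some
`p`-subgroup `S` acts transitively on `X`: every nonzero submodule contains a nonzero `S`-fixed
vector, and the `S`-fixed vectors of `k[X]` are the constants, so two complementary submodules
cannot both be nonzero. Here `X = H ⧸ K` with `H = ι(Q)·C_G(ι(Q))` and
`K = ι(Q)·C_{ι(M)}(ι(Q))`; the index `|H : K|` is a power of `2`, so a Sylow `2`-subgroup of `H`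
acts transitively on `X`.

The index is a `2`-power because `G = Park(M, P)` permutes the three left cosets of `P`, and an
element of odd order fixing a coset `mP` fixes `m` (it acts on `mP` through the `2`-group `P`).
So elements of odd prime order act faithfully on `M ⧸ P`: the only odd prime dividing `|G|` is
`3`, `9 ∤ |G|`, and elements of order `3` permute the cosets cyclically. If `3` divided the index,
an element of order `3` of `H` would centralize the `2`-group `ι(Q)`; its orbit through `1` lies
in `C_M(Q)` and meets all three cosets, so `3 ∣ |C_M(Q)|`, and then `9` would divide `|H|`.
-/

theorem Representation.coeff_eq_of_forall_ofMulAction_eq {k G X : Type*} [Semiring k] [Group G]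
    [MulAction G X] (S : Subgroup G) [MulAction.IsPretransitive S X] {f : MonoidAlgebra k X}
    (hf : ∀ s ∈ S, ofMulAction k G X s f = f) (x y : X) : f.coeff x = f.coeff y := by
  obtain ⟨s, rfl⟩ := MulAction.exists_smul_eq S x y
  conv_rhs => rw [← hf s s.2]
  rw [coeff_ofMulAction, Subgroup.smul_def, inv_smul_smul]

section PermutationModule

variable {k G : Type*} [Field k] [Group G] {p : ℕ} [Fact p.Prime] [CharP k p]

theorem Representation.invariants_ne_bot_of_isPGroup {V : Type*} [AddCommGroup V] [Module k V]
    [Finite G] [Nontrivial V] (ρ : Representation k G V) (hG : IsPGroup p G) :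
    ρ.invariants ≠ ⊥ := by
  obtain ⟨v, hv⟩ := exists_ne (0 : V)
  have hp (x : V) : p • x = 0 := by
    rw [← Nat.cast_smul_eq_nsmul k, CharP.cast_eq_zero, zero_smul]
  have : Module (ZMod p) V := AddCommGroup.zmodModule hp
  -- The `𝔽_p`-span `W` of the orbit of `v` is a finite `p`-group permuted by `G`, so counting
  -- fixed points modulo `p` yields a fixed point besides `0`.
  let W : Submodule (ZMod p) V := Submodule.span (ZMod p) (Set.range fun g => ρ g v)
  have : Module.Finite (ZMod p) W := .span_of_finite (ZMod p) (Set.finite_range _)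
  have : Finite W := Module.finite_of_finite (ZMod p)
  have hW (g : G) : W ≤ W.comap ((ρ g).toAddMonoidHom.toZModLinearMap p) :=
    Submodule.span_le.mpr <| by
      rintro _ ⟨h, rfl⟩
      exact Submodule.subset_span ⟨g * h, by simp⟩
  let _ : MulAction G W :=
    { smul g w := ⟨ρ g w, hW g w.2⟩
      one_smul w := Subtype.ext (by change ρ 1 w = w; simp)
      mul_smul g h w := Subtype.ext (by change ρ (g * h) w = ρ g (ρ h w); simp) }
  have hvW : v ∈ W := Submodule.subset_span ⟨1, by simp⟩
  have hpW : p ∣ Nat.card W := by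
    have := addOrderOf_dvd_natCard (⟨v, hvW⟩ : W)
    rwa [addOrderOf_eq_prime (Subtype.ext (hp v)) (by simpa using hv)] at this
  obtain ⟨w, hw, hw0⟩ := hG.exists_fixed_point_of_prime_dvd_card_of_fixed_point W hpW
    (a := 0) fun g => Subtype.ext (map_zero (ρ g))
  rw [Submodule.ne_bot_iff]
  exact ⟨w, fun g => congrArg Subtype.val (hw g), fun h => hw0 (Subtype.ext h.symm)⟩

theorem Subrepresentation.exists_ne_zero_forall_apply_eq {V : Type*} [AddCommGroup V]
    [Module k V] {ρ : Representation k G V} {σ : Subrepresentation ρ} {v : V} (hv : v ∈ σ)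
    (hv0 : v ≠ 0) (S : Subgroup G) [Finite S] (hS : IsPGroup p S) :
    ∃ w ∈ σ, w ≠ 0 ∧ ∀ s ∈ S, ρ s w = w := by
  have : Nontrivial σ.toSubmodule := nontrivial_of_ne ⟨v, hv⟩ 0 (by simpa using hv0)
  obtain ⟨w, hw, hw0⟩ := Submodule.exists_mem_ne_zero_of_ne_bot
    (Representation.invariants_ne_bot_of_isPGroup (σ.toRepresentation.comp S.subtype) hS)
  exact ⟨w, w.2, fun h => hw0 (Subtype.ext h),
    fun s hs => congrArg Subtype.val (hw ⟨s, hs⟩)⟩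

theorem isIndecomposableModule_permutationModule {X : Type*} [MulAction G X] [Nonempty X]
    (S : Subgroup G) [Finite S] (hS : IsPGroup p S) [MulAction.IsPretransitive S X] :
    IsIndecomposableModule (MonoidAlgebra k G) (PermutationModule k G X) := by
  refine ⟨inferInstanceAs (Nontrivial (MonoidAlgebra k X)), fun U W hUW => ?_⟩
  by_contra! h
  obtain ⟨u', hu'U, hu'0⟩ := Submodule.exists_mem_ne_zero_of_ne_bot h.1
  obtain ⟨w', hw'W, hw'0⟩ := Submodule.exists_mem_ne_zero_of_ne_bot h.2
  obtain ⟨u, huU, hu0, hu⟩ := Subrepresentation.exists_ne_zero_forall_apply_eq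
    (σ := .ofSubmodule' U) hu'U hu'0 S hS
  obtain ⟨w, hwW, hw0, hw⟩ := Subrepresentation.exists_ne_zero_forall_apply_eq
    (σ := .ofSubmodule' W) hw'W hw'0 S hS
  have hu_const := Representation.coeff_eq_of_forall_ofMulAction_eq S hu
  have hw_const := Representation.coeff_eq_of_forall_ofMulAction_eq S hw
  obtain ⟨x⟩ := ‹Nonempty X›
  have hux : u.coeff x ≠ 0 := fun h0 => hu0 <| MonoidAlgebra.ext <| Finsupp.ext fun y => by
    rw [hu_const y x, h0, MonoidAlgebra.coeff_zero, Finsupp.zero_apply]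
  have hwu : w = (w.coeff x / u.coeff x) • u := MonoidAlgebra.ext <| Finsupp.ext fun y => by
    rw [MonoidAlgebra.coeff_smul_apply, smul_eq_mul, hu_const y x, hw_const y x]
    field_simp
  have : w ∈ U ⊓ W :=
    ⟨hwu ▸ (Subrepresentation.ofSubmodule' U).toSubmodule.smul_mem _ huU, hwW⟩
  rw [hUW.inf_eq_bot] at this
  exact hw0 this

end PermutationModule

theorem Sylow.isPretransitive_of_card_eq_pow {G X : Type*} [Group G] [Finite G] [MulAction G X]
    [MulAction.IsPretransitive G X] {p : ℕ} [Fact p.Prime] (P : Sylow p G) {n : ℕ}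
    (hX : Nat.card X = p ^ n) : MulAction.IsPretransitive P X := by
  obtain ⟨⟨x⟩, _⟩ := Nat.card_ne_zero.mp (hX ▸ (pow_pos (Fact.out : p.Prime).pos n).ne')
  set H := MulAction.stabilizer G x
  have hH : H.index = p ^ n := by rw [MulAction.index_stabilizer_of_transitive, hX]
  have horbit : (MulAction.orbit P x).ncard = H.relIndex P := by
    rw [← MulAction.index_stabilizer]
    rfl
  -- `p ^ n` divides `|G : H ⊓ P| = |P : H ⊓ P| * |G : P|`, and `p` does not divide `|G : P|`
  have hdvd : p ^ n ∣ H.relIndex P * (P : Subgroup G).index := by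
    rw [← Subgroup.inf_relIndex_right, Subgroup.relIndex_mul_index inf_le_right, ← hH]
    exact Subgroup.index_dvd_of_le inf_le_left
  have hcop : (p ^ n).Coprime (P : Subgroup G).index :=
    .pow_left n ((Nat.Prime.coprime_iff_not_dvd Fact.out).mpr P.not_dvd_index)
  rw [MulAction.isPretransitive_iff_orbit_eq_univ x]
  refine Set.eq_of_subset_of_ncard_le (Set.subset_univ _) ?_
  rw [Set.ncard_univ, hX, horbit]
  exact Nat.le_of_dvd (Nat.pos_of_ne_zero (Subgroup.index_ne_zero_of_finite (H := H.subgroupOf P)))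
    (hcop.dvd_of_dvd_mul_right hdvd)

theorem IsSylowIn.card_quotient_eq {G : Type*} [Group G] [Finite G] {p : ℕ} [Fact p.Prime]
    {P : Subgroup G} (hP : IsSylowIn p ⊤ P) {m n : ℕ} (hm : ¬ p ∣ m)
    (hG : Nat.card G = m * p ^ n) : Nat.card (G ⧸ P) = m := by
  obtain ⟨S, hPS⟩ := hP.2.1.exists_le_sylow
  have hSP : (S : Subgroup G) = P := hP.2.2 S le_top S.2 hPS
  have hpn : p ^ n ≠ 0 := (pow_pos (Fact.out : p.Prime).pos n).ne'
  have hcard : Nat.card P = p ^ n := by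
    have hm0 : m ≠ 0 := fun h => hm (h ▸ dvd_zero p)
    rw [← hSP, S.card_eq_multiplicity, hG, Nat.factorization_mul hm0 hpn]
    simp [Nat.factorization_eq_zero_of_not_dvd hm, (Fact.out : p.Prime).factorization_self]
  have := P.card_mul_index
  rw [hcard, hG, mul_comm, P.index_eq_card] at this
  exact Nat.eq_of_mul_eq_mul_right (Nat.pos_of_ne_zero hpn) this

theorem Subgroup.mem_centralizer_of_mem_sup_of_pow_eq_one {G : Type*} [Group G] {p : ℕ}
    {A : Subgroup G} (hA : IsPGroup p A) {γ : G} (hγ : γ ∈ A ⊔ centralizer (A : Set G))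
    {r : ℕ} (hr : p.Coprime r) (hγr : γ ^ r = 1) : γ ∈ centralizer (A : Set G) := by
  have hA_le : A ≤ normalizer (centralizer (A : Set G) : Set G) :=
    (le_centralizer_iff.mpr le_rfl).trans (centralizer_le_normalizer _)
  rw [← SetLike.mem_coe, coe_mul_of_left_le_normalizer_right _ _ hA_le] at hγ
  obtain ⟨a, ha, c, hc, rfl⟩ := hγ
  have har : a ^ r ∈ centralizer (A : Set G) := by
    rw [(show Commute a c from hc a ha).mul_pow, mul_eq_one_iff_eq_inv] at hγr
    exact hγr ▸ inv_mem (pow_mem hc r)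
  -- `a` is a power of `a ^ r`, as `r` is prime to the order of `a`
  have ha_eq : (⟨a, ha⟩ : A) = (hA.powEquiv hr).symm (⟨a, ha⟩ ^ r) :=
    ((hA.powEquiv hr).symm_apply_apply _).symm
  rw [IsPGroup.powEquiv_symm_apply, Subtype.ext_iff, Subgroup.coe_zpow, Subgroup.coe_pow] at ha_eq
  change a = (a ^ r) ^ _ at ha_eq
  change a * c ∈ _
  rw [ha_eq]
  exact mul_mem (zpow_mem har _) hc

theorem parkEmbed_smul {M : Type*} [Group M] {P : Subgroup M} (m x : M) :
    parkEmbed M P m • x = m * x :=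
  rfl

theorem parkEmbed_injective {M : Type*} [Group M] {P : Subgroup M} :
    Function.Injective (parkEmbed M P) := fun m m' h => by
  simpa [parkEmbed_smul] using congr($h • (1 : M))

theorem map_centralizer_le_qcM {M : Type*} [Group M] (P Q : Subgroup M) :
    (Subgroup.centralizer (Q : Set M)).map (parkEmbed M P) ≤ qcM M P Q := fun _ hx =>
  Subgroup.mem_sup_right <| Subgroup.mem_inf.mpr ⟨Subgroup.map_le_range _ _ hx, by
    simpa only [Subgroup.coe_map] using Subgroup.map_centralizer_le_centralizer_image _ _ hx⟩

namespace parkGroup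

variable {M : Type*} [Group M] {P : Subgroup M}

theorem smul_mul_of_mem (g : parkGroup M P) (m : M) {u : M} (hu : u ∈ P) :
    g • (m * u) = g • m * u :=
  g.2 m u hu

instance : MulAction.QuotientAction (parkGroup M P) P where
  inv_mul_mem g a a' h := by
    rwa [← mul_inv_cancel_left a a', smul_mul_of_mem g a h, inv_mul_cancel_left]

theorem pow_smul_eq_mul_pow (g : parkGroup M P) {m : M} (hm : m⁻¹ * g • m ∈ P) (j : ℕ) :
    g ^ j • m = m * (m⁻¹ * g • m) ^ j := by
  induction j with
  | zero => simp
  | succ j ih =>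
    rw [pow_succ', mul_smul, ih, smul_mul_of_mem g m (pow_mem hm j), pow_succ', ← mul_assoc,
      mul_inv_cancel_left]

theorem smul_mem_centralizer {Q : Subgroup M} (hQP : Q ≤ P) {g : parkGroup M P}
    (hg : g ∈ Subgroup.centralizer (Q.map (parkEmbed M P) : Set (parkGroup M P)))
    {m : M} (hm : m ∈ Subgroup.centralizer (Q : Set M)) :
    g • m ∈ Subgroup.centralizer (Q : Set M) := by
  rw [Subgroup.mem_centralizer_iff] at hm ⊢
  intro q hq
  have hgq := Subgroup.mem_centralizer_iff.mp hg _ ⟨q, hq, rfl⟩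
  calc q * g • m = (parkEmbed M P q * g) • m := by rw [mul_smul, parkEmbed_smul]
    _ = g • (m * q) := by rw [hgq, mul_smul, parkEmbed_smul, hm q hq]
    _ = g • m * q := smul_mul_of_mem g m (hQP hq)

section IsPGroup

variable {p : ℕ} (hP : IsPGroup p P)
include hP

-- On the coset `mP`, `g` acts as right multiplication by `m⁻¹ * g • m ∈ P`, an element of
-- `p`-power order whose `r`-th power is `1`.
theorem smul_eq_self_of_smul_coe_eq {g : parkGroup M P} {r : ℕ} (hr : p.Coprime r)
    (hg : g ^ r = 1) {m : M} (hm : g • (m : M ⧸ P) = m) : g • m = m := by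
  rw [MulAction.Quotient.smul_coe, eq_comm, QuotientGroup.eq] at hm
  have hb : (⟨_, hm⟩ : P) ^ r = 1 := by
    have := pow_smul_eq_mul_pow g hm r
    rw [hg, one_smul, left_eq_mul] at this
    exact Subtype.ext this
  have hb1 : (⟨_, hm⟩ : P) = 1 := (hP.powEquiv hr).injective (hb.trans (one_pow r).symm)
  rw [← mul_inv_cancel_left m (g • m)]
  exact mul_eq_left.mpr (congrArg Subtype.val hb1)

theorem eq_one_of_forall_smul_eq {g : parkGroup M P} {r : ℕ} (hr : p.Coprime r)
    (hg : g ^ r = 1) (h : ∀ x : M ⧸ P, g • x = x) : g = 1 :=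
  Subtype.ext <| Equiv.ext fun m => smul_eq_self_of_smul_coe_eq hP hr hg (h m)

theorem orderOf_toPermHom {g : parkGroup M P} {q : ℕ} (hq : q.Prime) (hpq : p.Coprime q)
    (hg : orderOf g = q) : orderOf (MulAction.toPermHom (parkGroup M P) (M ⧸ P) g) = q := by
  have hdvd := orderOf_map_dvd (MulAction.toPermHom (parkGroup M P) (M ⧸ P)) g
  rcases (Nat.dvd_prime hq).mp (hg ▸ hdvd) with h | h
  · have h1 := eq_one_of_forall_smul_eq hP hpq (hg ▸ pow_orderOf_eq_one g)
      fun x => congr($(orderOf_eq_one_iff.mp h) x)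
    rw [h1, orderOf_one] at hg
    exact absurd hg hq.one_lt.ne
  · exact h

theorem not_dvd_card_ker_toPermHom [Finite M] {q : ℕ} [Fact q.Prime] (hpq : p.Coprime q) :
    ¬ q ∣ Nat.card (MulAction.toPermHom (parkGroup M P) (M ⧸ P)).ker := fun hq => by
  obtain ⟨g, hg⟩ := exists_prime_orderOf_dvd_card' q hq
  rw [← Subgroup.orderOf_coe] at hg
  have h1 := eq_one_of_forall_smul_eq hP hpq (hg ▸ pow_orderOf_eq_one (g : parkGroup M P))
    fun x => congr($(g.2) x)
  rw [h1, orderOf_one] at hg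
  exact (Fact.out : q.Prime).one_lt.ne hg

end IsPGroup

section IndexThree

variable [Finite M]

theorem eq_three_of_orderOf_eq (hP : IsPGroup 2 P) (hP3 : Nat.card (M ⧸ P) = 3)
    {g : parkGroup M P} {q : ℕ} (hq : q.Prime) (hq2 : q ≠ 2) (hg : orderOf g = q) : q = 3 := by
  have h6 : q ∣ 2 * 3 := by
    rw [← orderOf_toPermHom hP hq ((Nat.coprime_primes Nat.prime_two hq).mpr hq2.symm) hg]
    exact (orderOf_dvd_natCard _).trans (by rw [Nat.card_perm, hP3]; rfl)
  rcases (Nat.Prime.dvd_mul hq).mp h6 with h | h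
  · exact absurd ((Nat.prime_dvd_prime_iff_eq hq Nat.prime_two).mp h) hq2
  · exact (Nat.prime_dvd_prime_iff_eq hq Nat.prime_three).mp h

theorem not_nine_dvd_card (hP : IsPGroup 2 P) (hP3 : Nat.card (M ⧸ P) = 3) :
    ¬ 9 ∣ Nat.card (parkGroup M P) := by
  set f := MulAction.toPermHom (parkGroup M P) (M ⧸ P)
  have hker : ¬ 3 ∣ Nat.card f.ker := not_dvd_card_ker_toPermHom hP (by decide)
  have hcard : Nat.card f.ker * Nat.card f.range = Nat.card (parkGroup M P) := by
    rw [← Subgroup.index_ker f]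
    exact f.ker.card_mul_index
  have hrange : Nat.card f.range ∣ 6 :=
    (Subgroup.card_subgroup_dvd_card _).trans (by rw [Nat.card_perm, hP3]; rfl)
  intro h9
  have := (Nat.Coprime.pow_left 2 ((Nat.Prime.coprime_iff_not_dvd Nat.prime_three).mpr
    hker)).dvd_of_dvd_mul_left (hcard ▸ h9)
  exact absurd (Nat.le_of_dvd (by norm_num) (this.trans hrange)) (by norm_num)

theorem exists_pow_smul_eq (hP : IsPGroup 2 P) (hP3 : Nat.card (M ⧸ P) = 3)
    {g : parkGroup M P} (hg : orderOf g = 3) (x y : M ⧸ P) :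
    ∃ i : ℕ, g ^ i • x = y := by
  classical
  have : Fintype (M ⧸ P) := Fintype.ofFinite _
  set σ := MulAction.toPermHom (parkGroup M P) (M ⧸ P) g
  have hσ : orderOf σ = 3 := orderOf_toPermHom hP Nat.prime_three (by decide) hg
  have hcard : Fintype.card (M ⧸ P) = 3 := by rw [← Nat.card_eq_fintype_card, hP3]
  -- an element of order `3` of `Sym(M ⧸ P) ≅ S₃` is a `3`-cycle, hence moves every point
  have hcycle : σ.IsCycle :=
    Equiv.Perm.isCycle_of_prime_order' (hσ ▸ Nat.prime_three) (by rw [hσ, hcard]; norm_num)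
  have hsupp : σ.support = Finset.univ :=
    Finset.eq_univ_of_card _ (by rw [← hcycle.orderOf, hσ, hcard])
  have hmoved (z : M ⧸ P) : σ z ≠ z := Equiv.Perm.mem_support.mp (hsupp ▸ Finset.mem_univ z)
  obtain ⟨i, hi⟩ := hcycle.exists_pow_eq (hmoved x) (hmoved y)
  rw [← map_pow] at hi
  exact ⟨i, hi⟩

theorem three_dvd_card_centralizer (hP : IsPGroup 2 P) (hP3 : Nat.card (M ⧸ P) = 3)
    {Q : Subgroup M} (hQP : Q ≤ P) {g : parkGroup M P}
    (hgC : g ∈ Subgroup.centralizer (Q.map (parkEmbed M P) : Set (parkGroup M P)))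
    (hg : orderOf g = 3) : 3 ∣ Nat.card (Subgroup.centralizer (Q : Set M)) := by
  set C := Subgroup.centralizer (Q : Set M)
  have : MulAction.IsPretransitive C (M ⧸ P) := by
    refine (MulAction.isPretransitive_iff_base ((1 : M) : M ⧸ P)).mpr fun y => ?_
    obtain ⟨i, hi⟩ := exists_pow_smul_eq hP hP3 hg (1 : M) y
    refine ⟨⟨g ^ i • 1, smul_mem_centralizer hQP (pow_mem hgC i) (one_mem C)⟩, ?_⟩
    rw [← hi]
    exact congrArg QuotientGroup.mk (mul_one (g ^ i • (1 : M)))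
  rw [← hP3, ← MulAction.index_stabilizer_of_transitive C ((1 : M) : M ⧸ P)]
  exact Subgroup.index_dvd_card _

end IndexThree

end parkGroup

theorem relIndex_qcM_qcG_eq_two_pow {M : Type*} [Group M] [Finite M] {P Q : Subgroup M}
    (hP : IsPGroup 2 P) (hP3 : Nat.card (M ⧸ P) = 3) (hQP : Q ≤ P) :
    ∃ c : ℕ, (qcM M P Q).relIndex (qcG M P Q) = 2 ^ c := by
  have hle : qcM M P Q ≤ qcG M P Q := sup_le_sup_left inf_le_right _
  have hcard :
      Nat.card (qcM M P Q) * (qcM M P Q).relIndex (qcG M P Q) = Nat.card (qcG M P Q) := by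
    rw [← Subgroup.relIndex_bot_left, ← Subgroup.relIndex_bot_left,
      Subgroup.relIndex_mul_relIndex _ _ _ bot_le hle]
  have hne : (qcM M P Q).relIndex (qcG M P Q) ≠ 0 :=
    Subgroup.index_ne_zero_of_finite (H := (qcM M P Q).subgroupOf (qcG M P Q))
  -- an odd prime `q` dividing the index would be `3`, and then `9` would divide `|Park(M, P)|`
  refine ⟨_, Nat.eq_prime_pow_of_unique_prime_dvd hne fun {q} hq hqH => ?_⟩
  by_contra hq2
  have : Fact q.Prime := ⟨hq⟩
  obtain ⟨γ, hγ⟩ :=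
    exists_prime_orderOf_dvd_card' q (hqH.trans (Subgroup.relIndex_dvd_card _ _))
  rw [← Subgroup.orderOf_coe] at hγ
  obtain rfl := parkGroup.eq_three_of_orderOf_eq hP hP3 hq hq2 hγ
  have hγC := Subgroup.mem_centralizer_of_mem_sup_of_pow_eq_one
    ((hP.to_le hQP).map (parkEmbed M P)) γ.2 (by decide : Nat.Coprime 2 3)
    (hγ ▸ pow_orderOf_eq_one _)
  have h3M : 3 ∣ Nat.card (qcM M P Q) := by
    have h3C := parkGroup.three_dvd_card_centralizer hP hP3 hQP hγC hγ
    rw [← Subgroup.card_map_of_injective parkEmbed_injective] at h3C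
    exact h3C.trans (Subgroup.card_dvd_of_le (map_centralizer_le_qcM P Q))
  exact parkGroup.not_nine_dvd_card hP hP3
    ((mul_dvd_mul h3M hqH).trans (hcard ▸ Subgroup.card_subgroup_dvd_card _))

theorem statement1_general (n : ℕ)
    (M : Type*) [Group M] [Finite M] (hM : Nat.card M = 3 * 2 ^ n)
    (P : Subgroup M) (hsyl : IsSylowIn 2 ⊤ P)
    (k : Type*) [Field k] [CharP k 2]
    (Q : Subgroup M) (hQP : Q ≤ P) :
    IsIndecomposableModule (MonoidAlgebra k ↥(qcG M P Q))
      (PermutationModule k ↥(qcG M P Q)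
        (↥(qcG M P Q) ⧸ (qcM M P Q).subgroupOf (qcG M P Q))) := by
  have hP : IsPGroup 2 P := hsyl.2.1
  have hP3 : Nat.card (M ⧸ P) = 3 := hsyl.card_quotient_eq (by decide) hM
  obtain ⟨c, hc⟩ := relIndex_qcM_qcG_eq_two_pow hP hP3 hQP
  let S : Sylow 2 (qcG M P Q) := default
  have := S.isPretransitive_of_card_eq_pow ((Subgroup.index_eq_card _).symm.trans hc)
  exact isIndecomposableModule_permutationModule S S.isPGroup'

/-- let `M` be a finite group of order `3·2^n` (`n ≥ 3`) with no
non-trivial normal subgroup of odd order and with a non-normal Sylow `2`-subgroup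
`P`, let `G = Park(M, P)`, `ι` Park's embedding, and `k` an algebraically closed
field of characteristic `2`.  Then for every subgroup `Q ≤ P`, the permutation
`k`-module of the group `ι(Q)·C_G(ι(Q))` on the left coset space
`(ι(Q)·C_G(ι(Q))) / (ι(Q)·C_{ι(M)}(ι(Q)))` is indecomposable. -/
theorem statement1 (n : ℕ) (hn : 3 ≤ n)
    (M : Type*) [Group M] [Finite M] (hM : Nat.card M = 3 * 2 ^ n)
    (hodd : ∀ K : Subgroup M, K.Normal → Odd (Nat.card K) → K = ⊥)
    (P : Subgroup M) (hsyl : IsSylowIn 2 ⊤ P) (hPnn : ¬ P.Normal)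
    (k : Type*) [Field k] [IsAlgClosed k] [CharP k 2]
    (Q : Subgroup M) (hQP : Q ≤ P) :
    IsIndecomposableModule (MonoidAlgebra k ↥(qcG M P Q))
      (PermutationModule k ↥(qcG M P Q)
        (↥(qcG M P Q) ⧸ (qcM M P Q).subgroupOf (qcG M P Q))) :=
  statement1_general n M hM P hsyl k Q hQP
end

section
/- Let p be a prime, G a finite group, k an algebraically closed field of characteristic p, and H a subgroup of G whose index |G : H| is a power of p. Then the permutation kG-module k[G/H] (that is, Ind_H^G(k)) is indecomposable. -/
open MulAction

theorem Subgroup.stabilizer_quotient_mk_one {G : Type*} [Group G] (H K : Subgroup G) :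
    stabilizer K ((1 : G) : G ⧸ H) = H.subgroupOf K := by
  ext g
  change (g : G) ∈ stabilizer G ((1 : G) : G ⧸ H) ↔ _
  rw [stabilizer_quotient, Subgroup.mem_subgroupOf]

theorem Subgroup.isPretransitive_quotient_of_index_dvd_relIndex {G : Type*} [Group G]
    {H K : Subgroup G} [H.FiniteIndex] (h : H.index ∣ H.relIndex K) :
    IsPretransitive K (G ⧸ H) := by
  have hK : H.relIndex K ≠ 0 := isFiniteRelIndex_of_finiteIndex.relIndex_ne_zero
  rw [isPretransitive_iff_orbit_eq_univ ((1 : G) : G ⧸ H)]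
  refine Set.eq_of_subset_of_ncard_le (Set.subset_univ _) ?_ (Set.toFinite _)
  rw [← index_stabilizer, stabilizer_quotient_mk_one, Set.ncard_univ, ← Subgroup.index]
  exact Nat.le_of_dvd (Nat.pos_of_ne_zero hK) h

theorem Sylow.isPretransitive_quotient_of_index_eq_pow {p : ℕ} [Fact p.Prime] {G : Type*}
    [Group G] [Finite G] (P : Sylow p G) {H : Subgroup G} {n : ℕ} (hH : H.index = p ^ n) :
    IsPretransitive (P : Subgroup G) (G ⧸ H) := by
  have : H.FiniteIndex := Subgroup.finiteIndex_of_finite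
  apply Subgroup.isPretransitive_quotient_of_index_dvd_relIndex
  have hcop : H.index.Coprime (P : Subgroup G).index :=
    hH ▸ .pow_left n ((Nat.Prime.coprime_iff_not_dvd Fact.out).2 P.not_dvd_index)
  refine hcop.dvd_of_dvd_mul_right ?_
  rw [← Subgroup.inf_relIndex_right, Subgroup.relIndex_mul_index inf_le_right]
  exact Subgroup.index_dvd_of_le inf_le_left

theorem IsPGroup.exists_ne_zero_mem_fixedPoints {p : ℕ} [Fact p.Prime] {P V : Type*} [Group P]
    [Finite P] (hP : IsPGroup p P) [AddCommGroup V] [DistribMulAction P V] [Nontrivial V]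
    (hV : ∀ v : V, p • v = 0) : ∃ v ∈ fixedPoints P V, v ≠ 0 := by
  obtain ⟨u, hu⟩ := exists_ne (0 : V)
  have : Finite (orbit P u) := Set.finite_range _
  let A := AddSubgroup.closure (orbit P u)
  have hA : IsAddTorsion A := fun a =>
    isOfFinAddOrder_iff_nsmul_eq_zero.2 ⟨p, (Fact.out : p.Prime).pos, Subtype.ext (hV a)⟩
  have : Finite A := AddCommGroup.finite_of_fg_isAddTorsion A hA
  have hpA : p ∣ Nat.card A := by
    have huA : u ∈ A := AddSubgroup.subset_closure (mem_orbit_self u)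
    rw [← addOrderOf_eq_prime (x := (⟨u, huA⟩ : A)) (Subtype.ext (hV u)) (by simpa using hu)]
    exact addOrderOf_dvd_natCard _
  let W : SubMulAction P V :=
    { carrier := A
      smul_mem' g _ hx := (AddSubgroup.closure_le (A.comap (DistribSMul.toAddMonoidHom V g))).2
        (fun _ hy => AddSubgroup.subset_closure (smul_orbit_subset g u (Set.smul_mem_smul_set hy)))
        hx }
  obtain ⟨w, hw, hw0⟩ := hP.exists_fixed_point_of_prime_dvd_card_of_fixed_point W hpA
    (a := ⟨0, A.zero_mem⟩) fun g => Subtype.ext (smul_zero g)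
  exact ⟨w, fun g => congrArg Subtype.val (hw g), fun h => hw0 (Subtype.ext h).symm⟩

theorem Submodule.exists_fixed_ne_zero_of_isPGroup {p : ℕ} [Fact p.Prime] {k G M : Type*}
    [CommRing k] [CharP k p] [Group G] [AddCommGroup M] [Module (MonoidAlgebra k G) M]
    {P : Subgroup G} [Finite P] (hP : IsPGroup p P) {U : Submodule (MonoidAlgebra k G) M}
    (hU : U ≠ ⊥) :
    ∃ v ∈ U, v ≠ 0 ∧ ∀ g ∈ P, MonoidAlgebra.of k G g • v = v := by
  let : DistribMulAction P U := .compHom U ((MonoidAlgebra.of k G).comp P.subtype)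
  have : Nontrivial U := Submodule.nontrivial_iff_ne_bot.2 hU
  have hp : ((p : ℕ) : MonoidAlgebra k G) = 0 := by
    rw [← map_natCast (algebraMap k (MonoidAlgebra k G)), CharP.cast_eq_zero, map_zero]
  obtain ⟨v, hv, hv0⟩ := hP.exists_ne_zero_mem_fixedPoints (V := U) fun v => by
    rw [← Nat.cast_smul_eq_nsmul (MonoidAlgebra k G), hp, zero_smul]
  exact ⟨v, v.2, by simpa using hv0, fun g hg => congrArg Subtype.val (hv ⟨g, hg⟩)⟩

namespace PermutationModule

section

variable (k G X : Type*) [CommSemiring k] [Group G] [MulAction G X] [Finite X]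

noncomputable def ones : PermutationModule k G X :=
  (Representation.ofMulAction k G X).asModuleEquiv.symm
    (MonoidAlgebra.ofCoeff (Finsupp.equivFunOnFinite.symm 1))

@[simp]
theorem coeff_ones (x : X) :
    ((Representation.ofMulAction k G X).asModuleEquiv (ones k G X)).coeff x = 1 := by
  simp [ones]

theorem ones_ne_zero [Nontrivial k] [Nonempty X] : ones k G X ≠ 0 := fun h => by
  simpa [h] using coeff_ones k G X (Classical.arbitrary X)

variable {k G X}

theorem eq_coeff_smul_ones {K : Subgroup G} (hK : IsPretransitive K X)
    {v : PermutationModule k G X} (hv : ∀ g ∈ K, MonoidAlgebra.of k G g • v = v) (x : X) :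
    v = ((Representation.ofMulAction k G X).asModuleEquiv v).coeff x • ones k G X := by
  set ρ := Representation.ofMulAction k G X
  apply ρ.asModuleEquiv.injective
  apply MonoidAlgebra.coeff_injective
  ext y
  obtain ⟨g, rfl⟩ := hK.exists_smul_eq x y
  have hfix : ρ g (ρ.asModuleEquiv v) = ρ.asModuleEquiv v := by
    have h := congrArg ρ.asModuleEquiv (hv g g.2)
    rwa [Representation.asModuleEquiv_map_smul, Representation.asAlgebraHom_of] at h
  calc (ρ.asModuleEquiv v).coeff (g • x)
      = (ρ g (ρ.asModuleEquiv v)).coeff ((g : G) • x) := by rw [hfix]; rfl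
    _ = (ρ.asModuleEquiv v).coeff x := by rw [Representation.coeff_ofMulAction, inv_smul_smul]
    _ = _ := by simp [ρ]

end

theorem ones_mem_of_ne_bot {p : ℕ} [Fact p.Prime] {k G : Type*} [Field k] [CharP k p] [Group G]
    [Finite G] {H : Subgroup G} {n : ℕ} (hH : H.index = p ^ n)
    {U : Submodule (MonoidAlgebra k G) (PermutationModule k G (G ⧸ H))} (hU : U ≠ ⊥) :
    ones k G (G ⧸ H) ∈ U := by
  obtain ⟨P⟩ : Nonempty (Sylow p G) := inferInstance
  obtain ⟨v, hvU, hv0, hv⟩ := U.exists_fixed_ne_zero_of_isPGroup P.isPGroup' hU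
  set c := ((Representation.ofMulAction k G (G ⧸ H)).asModuleEquiv v).coeff ((1 : G) : G ⧸ H)
  have hv_eq : v = c • ones k G (G ⧸ H) :=
    eq_coeff_smul_ones (P.isPretransitive_quotient_of_index_eq_pow hH) hv _
  have hc : c ≠ 0 := fun h => hv0 (by rw [hv_eq, h, zero_smul])
  have hones : ones k G (G ⧸ H) = c⁻¹ • v := by
    rw [hv_eq, smul_smul, inv_mul_cancel₀ hc, one_smul]
  rw [hones]
  exact U.smul_of_tower_mem c⁻¹ hvU

end PermutationModule

theorem statement3_general (p : ℕ) [Fact p.Prime] (k : Type*) [Field k] [CharP k p]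
    (G : Type*) [Group G] [Finite G] (H : Subgroup G) (hind : ∃ n : ℕ, H.index = p ^ n) :
    IsIndecomposableModule (MonoidAlgebra k G) (PermutationModule k G (G ⧸ H)) := by
  obtain ⟨n, hn⟩ := hind
  have hones := PermutationModule.ones_ne_zero k G (G ⧸ H)
  refine ⟨nontrivial_of_ne _ _ hones, fun U W hUW => ?_⟩
  by_contra! hne
  have hmem : PermutationModule.ones k G (G ⧸ H) ∈ U ⊓ W :=
    ⟨PermutationModule.ones_mem_of_ne_bot hn hne.1,
      PermutationModule.ones_mem_of_ne_bot hn hne.2⟩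
  rw [hUW.inf_eq_bot, Submodule.mem_bot] at hmem
  exact hones hmem

/-- If `k` is an algebraically closed field of characteristic `p`, `G` a
finite group and `H ≤ G` a subgroup of `p`-power index, then the permutation module
`k[G/H]` is an indecomposable `kG`-module. -/
theorem statement3 (p : ℕ) [Fact p.Prime] (k : Type*) [Field k] [IsAlgClosed k] [CharP k p]
    (G : Type*) [Group G] [Finite G] (H : Subgroup G) (hind : ∃ n : ℕ, H.index = p ^ n) :
    IsIndecomposableModule (MonoidAlgebra k G) (PermutationModule k G (G ⧸ H)) :=
  statement3_general p k G H hind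
end

section
/- Let p be a prime, G a finite group, H a subgroup of G, and P a Sylow p-subgroup of H such that the fusion systems F_P(H) and F_P(G) are equal. Then for every subgroup Q of P, the set T_G(Q,H) = { g ∈ G : g⁻¹Qg ≤ H } equals the product of subsets N_G(Q)·H. -/
open Pointwise

/-- Equality of the fusion systems `F_P(H)` and `F_P(G)` for `P ≤ H ≤ G`: every
`G`-conjugation between subgroups of `P` is realized by conjugation by an element
of `H`. -/
def FusionSystemsEq {G : Type*} [Group G] (H P : Subgroup G) : Prop :=
  ∀ Q : Subgroup G, Q ≤ P → ∀ g : G, (∀ x ∈ Q, g * x * g⁻¹ ∈ P) →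
    ∃ h ∈ H, ∀ x ∈ Q, g * x * g⁻¹ = h * x * h⁻¹

/-!
If `g⁻¹ Q g ≤ H`, Sylow's theorem in `H` gives `h ∈ H` with `u := h g⁻¹` conjugating `Q` into `P`.
Equality of the fusion systems realizes this conjugation by some `k ∈ H`, so `k⁻¹ u` centralizes `Q`
and `g = (k⁻¹ u)⁻¹ (k⁻¹ h) ∈ C_G(Q) H ⊆ N_G(Q) H`. The reverse inclusion holds because `Q ≤ P ≤ H`.
-/

section

variable {p : ℕ} {G : Type*} [Group G] {H P Q : Subgroup G}

namespace IsSylowIn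

def toSylow (hsyl : IsSylowIn p H P) : Sylow p H where
  toSubgroup := P.subgroupOf H
  isPGroup' := hsyl.2.1.comap_of_injective H.subtype H.subtype_injective
  is_maximal' {R} hR hPR := by
    have hmap : R.map H.subtype = P := by
      refine hsyl.2.2 _ (Subgroup.map_subtype_le R) (hR.map _) fun x hx => ?_
      exact ⟨⟨x, hsyl.1 hx⟩, hPR (Subgroup.mem_subgroupOf.mpr hx), rfl⟩
    rw [← hmap]
    exact (Subgroup.comap_map_eq_self_of_injective H.subtype_injective R).symm

theorem exists_conj_mem [Fact p.Prime] [Finite G] (hsyl : IsSylowIn p H P) {R : Subgroup G}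
    (hRH : R ≤ H) (hR : IsPGroup p R) : ∃ h ∈ H, ∀ x ∈ R, h * x * h⁻¹ ∈ P := by
  obtain ⟨S, hRS⟩ := (hR.comap_of_injective H.subtype H.subtype_injective).exists_le_sylow
  obtain ⟨h, hS⟩ := MulAction.exists_smul_eq H S hsyl.toSylow
  refine ⟨h, h.2, fun x hx => ?_⟩
  have hxS : (⟨x, hRH hx⟩ : H) ∈ S := hRS (Subgroup.mem_subgroupOf.mpr hx)
  have := Subgroup.smul_mem_pointwise_smul _ (MulAut.conj h) (S : Subgroup H) hxS
  rw [← Sylow.coe_subgroup_smul, hS] at this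
  exact Subgroup.mem_subgroupOf.mp this

end IsSylowIn

theorem FusionSystemsEq.exists_inv_mul_mem_centralizer (hfus : FusionSystemsEq H P) (hQ : Q ≤ P)
    {u : G} (hu : ∀ x ∈ Q, u * x * u⁻¹ ∈ P) :
    ∃ k ∈ H, k⁻¹ * u ∈ Subgroup.centralizer (Q : Set G) := by
  obtain ⟨k, hkH, hk⟩ := hfus Q hQ u hu
  refine ⟨k, hkH, Subgroup.mem_centralizer_iff.mpr fun x hx => ?_⟩
  calc x * (k⁻¹ * u) = k⁻¹ * (k * x * k⁻¹) * u := by group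
    _ = k⁻¹ * (u * x * u⁻¹) * u := by rw [hk x hx]
    _ = k⁻¹ * u * x := by group

theorem inv_mul_conj_mem_of_mem_normalizer_mul (hQH : Q ≤ H) {g : G}
    (hg : g ∈ (Subgroup.normalizer (Q : Set G) : Set G) * (H : Set G)) :
    ∀ x ∈ Q, g⁻¹ * x * g ∈ H := by
  obtain ⟨n, hn, h, hh, rfl⟩ := hg
  intro x hx
  have hxn : n⁻¹ * x * n ∈ Q := by
    simpa [mul_assoc] using (Subgroup.mem_normalizer_iff.mp (inv_mem hn) x).mp hx
  rw [show (n * h)⁻¹ * x * (n * h) = h⁻¹ * (n⁻¹ * x * n) * h by group]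
  exact mul_mem (mul_mem (inv_mem hh) (hQH hxn)) hh

theorem mem_centralizer_mul_of_inv_conj_mem [Fact p.Prime] [Finite G] (hsyl : IsSylowIn p H P)
    (hfus : FusionSystemsEq H P) (hQ : Q ≤ P) {g : G} (hg : ∀ x ∈ Q, g⁻¹ * x * g ∈ H) :
    g ∈ (Subgroup.centralizer (Q : Set G) : Set G) * (H : Set G) := by
  have hRH : Q.map (MulAut.conj g⁻¹).toMonoidHom ≤ H := by
    rintro _ ⟨x, hx, rfl⟩
    simpa [mul_assoc] using hg x hx
  obtain ⟨h, hh, hhP⟩ := hsyl.exists_conj_mem hRH ((hsyl.2.1.to_le hQ).map _)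
  obtain ⟨k, hk, hc⟩ := hfus.exists_inv_mul_mem_centralizer hQ (u := h * g⁻¹) fun x hx => by
    simpa [mul_assoc] using hhP _ ⟨x, hx, rfl⟩
  exact ⟨(k⁻¹ * (h * g⁻¹))⁻¹, inv_mem hc, k⁻¹ * h, mul_mem (inv_mem hk) hh, by group⟩

end

theorem statement4 (p : ℕ) [Fact p.Prime] (G : Type*) [Group G] [Finite G]
    (H P : Subgroup G) (hsyl : IsSylowIn p H P) (hfus : FusionSystemsEq H P)
    (Q : Subgroup G) (hQ : Q ≤ P) :
    {g : G | ∀ x ∈ Q, g⁻¹ * x * g ∈ H} = (Subgroup.normalizer (Q : Set G) : Set G) * (H : Set G) := by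
  ext g
  refine ⟨fun hg => ?_, inv_mul_conj_mem_of_mem_normalizer_mul (hQ.trans hsyl.1)⟩
  exact Set.mul_subset_mul (Subgroup.centralizer_le_normalizer _) subset_rfl
    (mem_centralizer_mul_of_inv_conj_mem hsyl hfus hQ hg)
end

section
/- Let p be a prime, G a finite group, H a subgroup of G, and P a Sylow p-subgroup of H such that the fusion systems F_P(H) and F_P(G) are equal. Let R be a subgroup of P such that C_G(R) is a p-group. Then the index |N_G(R) : N_H(R)| of N_H(R) = N_G(R) ∩ H in N_G(R) is a power of p. -/
open Pointwise

/-!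
If conjugation by `n ∈ N_G(R)` is realised on `R` by some `h ∈ H`, then `h⁻¹ n` centralizes `R`
and `h ∈ N_G(R)`. Hence equality of fusion systems gives the Frattini-type factorisation
`N_G(R) = C_G(R) · N_H(R)`, so `|N_G(R) : N_H(R)| = |C_G(R) : C_G(R) ∩ N_H(R)|`, which divides
the order of the `p`-group `C_G(R)`.
-/

namespace Subgroup

variable {G : Type*} [Group G]

theorem relIndex_eq_relIndex_of_le_of_subset_mul {A C N : Subgroup G} (hCN : C ≤ N)
    (hN : (N : Set G) ⊆ C * A) : A.relIndex N = A.relIndex C := by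
  have hsurj : Function.Surjective (quotientSubgroupOfEmbeddingOfLE A hCN) := by
    intro q
    obtain ⟨n, rfl⟩ := QuotientGroup.mk_surjective q
    obtain ⟨c, hc, a, ha, hca⟩ := hN n.2
    refine ⟨QuotientGroup.mk ⟨c, hc⟩, ?_⟩
    rw [quotientSubgroupOfEmbeddingOfLE_apply_mk, QuotientGroup.eq, mem_subgroupOf]
    simpa [← hca] using ha
  exact (Nat.card_congr <| Equiv.ofBijective _
    ⟨(quotientSubgroupOfEmbeddingOfLE A hCN).injective, hsurj⟩).symm

end Subgroup

namespace FusionSystemsEq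

variable {G : Type*} [Group G] {H P R : Subgroup G}

theorem exists_mem_inv_mul_mem_centralizer (hfus : FusionSystemsEq H P) (hR : R ≤ P) {g : G}
    (hg : ∀ x ∈ R, g * x * g⁻¹ ∈ P) : ∃ h ∈ H, g⁻¹ * h ∈ Subgroup.centralizer (R : Set G) := by
  obtain ⟨h, hH, hgh⟩ := hfus R hR g hg
  refine ⟨h, hH, Subgroup.mem_centralizer_iff.mpr fun x hx => ?_⟩
  calc x * (g⁻¹ * h) = g⁻¹ * (g * x * g⁻¹) * h := by group
    _ = g⁻¹ * (h * x * h⁻¹) * h := by rw [hgh x hx]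
    _ = g⁻¹ * h * x := by group

theorem normalizer_subset_centralizer_mul (hfus : FusionSystemsEq H P) (hR : R ≤ P) :
    (Subgroup.normalizer (R : Set G) : Set G) ⊆
      Subgroup.centralizer (R : Set G) * (Subgroup.normalizer (R : Set G) ⊓ H : Subgroup G) := by
  intro n hn
  have hn' : n⁻¹ ∈ Subgroup.normalizer (R : Set G) := inv_mem hn
  obtain ⟨h, hH, hc⟩ := hfus.exists_mem_inv_mul_mem_centralizer hR fun x hx =>
    hR ((Subgroup.mem_normalizer_iff.mp hn' x).mp hx)
  rw [inv_inv] at hc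
  have hN : h⁻¹ ∈ Subgroup.normalizer (R : Set G) := by
    simpa using mul_mem (inv_mem (Subgroup.centralizer_le_normalizer _ hc)) hn
  exact ⟨n * h, hc, h⁻¹, Subgroup.mem_inf.mpr ⟨hN, inv_mem hH⟩, by group⟩

end FusionSystemsEq

theorem statement6_general (p : ℕ) [Fact p.Prime] (G : Type*) [Group G] [Finite G]
    (H P : Subgroup G) (hfus : FusionSystemsEq H P)
    (R : Subgroup G) (hR : R ≤ P) (hcent : IsPGroup p (Subgroup.centralizer (R : Set G))) :
    ∃ n : ℕ, (Subgroup.normalizer (R : Set G) ⊓ H).relIndex (Subgroup.normalizer (R : Set G)) = p ^ n := by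
  rw [Subgroup.relIndex_eq_relIndex_of_le_of_subset_mul (Subgroup.centralizer_le_normalizer _)
    (hfus.normalizer_subset_centralizer_mul hR)]
  exact hcent.index _

theorem statement6 (p : ℕ) [Fact p.Prime] (G : Type*) [Group G] [Finite G]
    (H P : Subgroup G) (hsyl : IsSylowIn p H P) (hfus : FusionSystemsEq H P)
    (R : Subgroup G) (hR : R ≤ P) (hcent : IsPGroup p (Subgroup.centralizer (R : Set G))) :
    ∃ n : ℕ, (Subgroup.normalizer (R : Set G) ⊓ H).relIndex (Subgroup.normalizer (R : Set G)) = p ^ n :=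
  statement6_general p G H P hfus R hR hcent
end

section
/- Let p be a prime, k an algebraically closed field of characteristic p, G a finite group, H a subgroup of G, and P a Sylow p-subgroup of H such that the fusion systems F_P(H) and F_P(G) are equal. Suppose there exists a normal p-subgroup N of G such that C_G(N ∩ H) is a p-group. Then the permutation kG-module k[G/H] (that is, Ind_H^G(k)) is indecomposable (equivalently, the Scott module Sc(G,P) equals Ind_H^G(k)). -/
/-!
Put `R = N ⊓ H`, `C = C_G(R)` and `x₀ = H ∈ G ⧸ H`. As `N` is a normal `p`-subgroup,
`R ≤ P`, and the fusion hypothesis moves every `R`-fixed coset `gH` to some `c • x₀` with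
`c ∈ C`: the `R`-fixed points of `G ⧸ H` form a single orbit of the `p`-group `C`.

Let `k[G ⧸ H] = U ⊕ W`. An `R`-invariant vector vanishing at the `R`-fixed points is a
combination of sums over `R`-orbits of length divisible by `p`, so the projection onto `U` keeps
it vanishing there (the Brauer quotient at `R` is functorial). If both `U` and `W` contained
`R`-invariant vectors not vanishing at the fixed points, a fixed point argument for `C` would
provide such vectors that are constant on the fixed points, and a suitable combination of the
two would contradict functoriality. So, say, every `R`-invariant vector of `W` vanishes at `x₀`.
If `W ≠ 0`, it contains a nonzero `N`-invariant vector `w`; if `w (g • x₀) ≠ 0`, then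
`g⁻¹ • w ∈ W` is `R`-invariant, as `N` is normal, and does not vanish at `x₀`. So `W = 0`.
-/

open Pointwise

open MulAction Representation

namespace MonoidAlgebra

variable {k X : Type*} [CommRing k]

theorem mem_supported_compl {s : Set X} {v : MonoidAlgebra k X} :
    v ∈ supported k k sᶜ ↔ ∀ x ∈ s, v.coeff x = 0 := by
  simp [mem_supported']

theorem coeff_linearMap_apply_eq_sum [Fintype X]
    (π : MonoidAlgebra k X →ₗ[k] MonoidAlgebra k X) (v : MonoidAlgebra k X) (μ : X) :
    (π v).coeff μ = ∑ x, v.coeff x * (π (single x 1)).coeff μ := by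
  conv_lhs => rw [← (basis X k).sum_repr v]
  simp only [map_sum, map_smul, coeff_sum, coeff_smul, Finsupp.finsetSum_apply,
    Finsupp.smul_apply, smul_eq_mul, basis_apply]
  rfl

end MonoidAlgebra

namespace Subrepresentation

variable {k G V : Type*} [AddCommGroup V]

theorem commute_projection [Ring k] [Monoid G] [Module k V] {ρ : Representation k G V}
    {U W : Subrepresentation ρ} (h : IsCompl U.toSubmodule W.toSubmodule) (g : G) :
    Commute (U.toSubmodule.projection W.toSubmodule h) (ρ g) := by
  refine (LinearMap.IsIdempotentElem.commute_iff
    (Submodule.isIdempotentElem_projection h)).mpr ⟨?_, ?_⟩ <;>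
    rw [Module.End.mem_invtSubmodule_iff_forall_mem_of_mem]
  · rw [Submodule.range_projection]; exact fun v ↦ (U.apply_mem_toSubmodule g ·)
  · rw [Submodule.ker_projection]; exact fun v ↦ (W.apply_mem_toSubmodule g ·)

theorem isCompl_ofSubmodule' [CommRing k] [Monoid G] [Module k V] {ρ : Representation k G V}
    {U W : Submodule (MonoidAlgebra k G) ρ.asModule} (h : IsCompl U W) :
    IsCompl (ofSubmodule' U).toSubmodule (ofSubmodule' W).toSubmodule := by
  have h' : IsCompl (ofSubmodule' U) (ofSubmodule' W) :=
    (OrderIso.isCompl_iff subrepresentationSubmoduleOrderIso.symm).mp h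
  exact ⟨disjoint_iff.mpr (by rw [← toSubmodule_inf, h'.inf_eq_bot]; rfl),
    codisjoint_iff.mpr (by rw [← toSubmodule_sup, h'.sup_eq_top]; rfl)⟩

end Subrepresentation

theorem Representation.coeff_smul_of_mem_invariants {k G X : Type*} [CommRing k] [Group G]
    [MulAction G X] {v : MonoidAlgebra k X} (hv : v ∈ (ofMulAction k G X).invariants) (g : G)
    (x : X) : v.coeff (g • x) = v.coeff x := by
  conv_rhs => rw [← hv g⁻¹, coeff_ofMulAction, inv_inv]

theorem MulAction.smul_mem_fixedPoints_of_mem_centralizer {G X : Type*} [Group G]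
    [MulAction G X] {R : Subgroup G} {c : G} (hc : c ∈ Subgroup.centralizer (R : Set G))
    {x : X} (hx : x ∈ fixedPoints R X) : c • x ∈ fixedPoints R X := fun r ↦ by
  rw [Subgroup.smul_def, smul_smul, Subgroup.mem_centralizer_iff.mp hc r r.2, mul_smul]
  exact congrArg (c • ·) (hx r)

namespace IsPGroup

variable {p : ℕ} [Fact p.Prime] {Γ : Type*} [Group Γ]

theorem sum_eq_zero_of_smul_invariant {X R : Type*} [MulAction Γ X] [Fintype X] [Semiring R]
    [CharP R p] (hΓ : IsPGroup p Γ) {f : X → R} (hf : ∀ (γ : Γ) x, f (γ • x) = f x)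
    (hfix : ∀ x ∈ fixedPoints Γ X, f x = 0) : ∑ x, f x = 0 := by
  classical
  rw [← Finset.sum_fiberwise_of_maps_to
    (fun x _ ↦ Finset.mem_image_of_mem f (Finset.mem_univ x))]
  refine Finset.sum_eq_zero fun c _ ↦ ?_
  rw [Finset.sum_congr rfl fun x hx ↦ (Finset.mem_filter.mp hx).2, Finset.sum_const]
  by_cases hc : c = 0
  · rw [hc, smul_zero]
  -- the fibre `f⁻¹ c` is a `Γ`-set without fixed points
  let Y : SubMulAction Γ X := ⟨{x | f x = c}, fun γ x hx ↦ (hf γ x).trans hx⟩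
  have hY : IsEmpty (fixedPoints Γ Y) := ⟨fun ⟨⟨y, hy⟩, hfy⟩ ↦
    hc (hy.symm.trans (hfix y fun γ ↦ congrArg Subtype.val (hfy γ)))⟩
  have hcard : p ∣ Nat.card Y := Nat.modEq_zero_iff_dvd.mp <| by
    simpa using hΓ.card_modEq_card_fixedPoints Y
  rw [nsmul_eq_mul, (CharP.cast_eq_zero_iff R p _).mpr, zero_mul]
  convert hcard using 1
  rw [Nat.card_eq_fintype_card, Fintype.card_subtype]
  rfl

variable {k V : Type*} [CommRing k] [CharP k p] [AddCommGroup V] [Module k V]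

theorem invariants_ne_bot [Finite Γ] [Nontrivial V] (hΓ : IsPGroup p Γ)
    (ρ : Representation k Γ V) : ρ.invariants ≠ ⊥ := by
  obtain ⟨v₀, hv₀⟩ := exists_ne (0 : V)
  -- `Γ` permutes the finite elementary abelian `p`-group generated by the orbit of `v₀`,
  -- which has the fixed point `0`, hence another one
  let _ : MulAction Γ V := MulAction.compHom V ρ
  let T := AddSubgroup.closure (Set.range fun γ : Γ ↦ ρ γ v₀)
  have hpV : ∀ v : V, p • v = 0 := fun v ↦ by
    rw [← Nat.cast_smul_eq_nsmul k, CharP.cast_eq_zero, zero_smul]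
  let S : SubMulAction Γ V :=
    { carrier := T
      smul_mem' γ _ hv := (AddSubgroup.closure_le (K := T.comap (ρ γ).toAddMonoidHom)).mpr
        (by
          rintro _ ⟨δ, rfl⟩
          exact AddSubgroup.subset_closure ⟨γ * δ, by simp [map_mul]⟩) hv }
  have : Finite S := AddCommGroup.finite_of_fg_isAddTorsion T fun v ↦
    isOfFinAddOrder_iff_nsmul_eq_zero.mpr ⟨p, (Fact.out : p.Prime).pos, Subtype.ext (hpV v)⟩
  have hpT : IsPGroup p (Multiplicative T) := fun v ↦
    ⟨1, Multiplicative.toAdd.injective <| by rw [pow_one, toAdd_pow]; exact Subtype.ext (hpV _)⟩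
  have hpS : p ∣ Nat.card S := by
    refine hpT.card_eq_or_dvd.resolve_left fun h ↦ hv₀ ?_
    have := (Nat.card_eq_one_iff_unique.mp h).1
    have hv₀T : v₀ ∈ T := AddSubgroup.subset_closure ⟨1, by simp⟩
    exact congrArg (fun v : Multiplicative T ↦ (v.toAdd : V))
      (Subsingleton.elim (Multiplicative.ofAdd ⟨v₀, hv₀T⟩) 1)
  obtain ⟨v, hv, hv0⟩ := hΓ.exists_fixed_point_of_prime_dvd_card_of_fixed_point S hpS
    (a := ⟨0, T.zero_mem⟩) fun γ ↦ Subtype.ext (map_zero (ρ γ))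
  rw [Submodule.ne_bot_iff]
  exact ⟨v, fun γ ↦ congrArg Subtype.val (hv γ), fun h ↦ hv0 (Subtype.ext h.symm)⟩

theorem exists_mem_notMem_forall_sub_mem [Finite Γ] (hΓ : IsPGroup p Γ)
    (ρ : Representation k Γ V) {A B : Submodule k V} (hA : ∀ γ, A ≤ A.comap (ρ γ))
    (hB : ∀ γ, B ≤ B.comap (ρ γ)) (hAB : ¬ A ≤ B) :
    ∃ v ∈ A, v ∉ B ∧ ∀ γ, ρ γ v - v ∈ B := by
  let ρB := ρ.quotient B hB
  have hA' : ∀ γ, A.map B.mkQ ≤ (A.map B.mkQ).comap (ρB γ) := by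
    rintro γ _ ⟨v, hv, rfl⟩
    exact ⟨ρ γ v, hA γ hv, rfl⟩
  have : Nontrivial (A.map B.mkQ) := Submodule.nontrivial_iff_ne_bot.mpr <| by
    rwa [Ne, ← LinearMap.le_ker_iff_map, Submodule.ker_mkQ]
  obtain ⟨⟨_, v, hvA, rfl⟩, hv, hv0⟩ :=
    Submodule.exists_mem_ne_zero_of_ne_bot (hΓ.invariants_ne_bot (ρB.subrepresentation _ hA'))
  exact ⟨v, hvA, fun h ↦ hv0 (Subtype.ext ((Submodule.Quotient.mk_eq_zero B).mpr h)),
    fun γ ↦ (Submodule.Quotient.eq B).mp (congrArg Subtype.val (hv γ))⟩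

/-- Functoriality of the Brauer quotient of `k[X]` at `Γ`. -/
theorem map_mem_supported_compl_fixedPoints {X : Type*} [MulAction Γ X] [Fintype X]
    (hΓ : IsPGroup p Γ) {π : MonoidAlgebra k X →ₗ[k] MonoidAlgebra k X}
    (hπ : ∀ γ, Commute π (ofMulAction k Γ X γ)) {v : MonoidAlgebra k X}
    (hv : v ∈ (ofMulAction k Γ X).invariants)
    (hvZ : v ∈ MonoidAlgebra.supported k k (fixedPoints Γ X)ᶜ) :
    π v ∈ MonoidAlgebra.supported k k (fixedPoints Γ X)ᶜ := by
  rw [MonoidAlgebra.mem_supported_compl] at hvZ ⊢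
  intro μ hμ
  rw [MonoidAlgebra.coeff_linearMap_apply_eq_sum]
  refine hΓ.sum_eq_zero_of_smul_invariant (fun γ x ↦ ?_) fun x hx ↦ by rw [hvZ x hx, zero_mul]
  have hπx : (π (.single (γ • x) 1)).coeff μ = (π (.single x 1)).coeff μ := by
    rw [← ofMulAction_single, ← Module.End.mul_apply, (hπ γ).eq, Module.End.mul_apply,
      coeff_ofMulAction, hμ γ⁻¹]
  rw [coeff_smul_of_mem_invariants hv, hπx]

end IsPGroup

namespace Representation

variable {p : ℕ} [Fact p.Prime] {k G X : Type*} [CommRing k] [CharP k p] [Group G]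
  [Finite G] [MulAction G X]

theorem exists_mem_invariants_coeff_ne_zero [IsPretransitive G X] {N R : Subgroup G}
    [N.Normal] (hN : IsPGroup p N) (hRN : R ≤ N) (x₀ : X)
    (W : Subrepresentation (ofMulAction k G X)) (hW : W.toSubmodule ≠ ⊥) :
    ∃ w ∈ W.toSubmodule ⊓ (ofMulAction k R X).invariants, w.coeff x₀ ≠ 0 := by
  obtain ⟨v, hvW, hv0, hvN⟩ := hN.exists_mem_notMem_forall_sub_mem (ofMulAction k N X)
    (A := W.toSubmodule) (B := ⊥) (fun n _ hv ↦ W.apply_mem_toSubmodule n hv)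
    (fun _ _ hv ↦ by simp_all) (by rwa [le_bot_iff])
  obtain ⟨x, hx⟩ : ∃ x, v.coeff x ≠ 0 := by
    by_contra! h
    exact hv0 (by simpa using MonoidAlgebra.ext (Finsupp.ext h))
  obtain ⟨g, rfl⟩ := exists_smul_eq G x₀ x
  refine ⟨ofMulAction k G X g⁻¹ v, ⟨W.apply_mem_toSubmodule _ hvW, fun r ↦ ?_⟩, ?_⟩
  · have hconj : ofMulAction k G X (g * r * g⁻¹) v = v :=
      sub_eq_zero.mp (hvN ⟨_, ‹N.Normal›.conj_mem r (hRN r.2) g⟩)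
    change ofMulAction k G X r (ofMulAction k G X g⁻¹ v) = _
    conv_rhs => rw [← hconj]
    simp only [← Module.End.mul_apply, ← map_mul]
    group
  · rwa [coeff_ofMulAction, inv_inv]

variable {R C : Subgroup G} {x₀ : X}

theorem exists_mem_invariants_coeff_eq (hC : IsPGroup p C)
    (hCR : C ≤ Subgroup.centralizer (R : Set G)) (hx₀ : x₀ ∈ fixedPoints R X)
    (hfix : fixedPoints R X ⊆ orbit C x₀) (U : Subrepresentation (ofMulAction k G X))
    (hU : ¬ U.toSubmodule ⊓ (ofMulAction k R X).invariants ≤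
      MonoidAlgebra.supported k k (fixedPoints R X)ᶜ) :
    ∃ u ∈ U.toSubmodule ⊓ (ofMulAction k R X).invariants, u.coeff x₀ ≠ 0 ∧
      ∀ x ∈ fixedPoints R X, u.coeff x = u.coeff x₀ := by
  have hcomm : ∀ c : C, ∀ r : R, (r : G) * c = c * r := fun c r ↦
    Subgroup.mem_centralizer_iff.mp (hCR c.2) r r.2
  obtain ⟨u, hu, huZ, huC⟩ := hC.exists_mem_notMem_forall_sub_mem (ofMulAction k C X)
    (A := U.toSubmodule ⊓ (ofMulAction k R X).invariants)
    (B := MonoidAlgebra.supported k k (fixedPoints R X)ᶜ)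
    (fun c v ⟨hvU, hvR⟩ ↦ ⟨U.apply_mem_toSubmodule c hvU, fun r ↦ by
      change ofMulAction k G X r (ofMulAction k G X c v) = ofMulAction k G X c v
      rw [← Module.End.mul_apply, ← map_mul, hcomm, map_mul, Module.End.mul_apply]
      exact congrArg _ (hvR r)⟩)
    (fun c v hv ↦ by
      rw [MonoidAlgebra.mem_supported_compl] at hv
      rw [Submodule.mem_comap, MonoidAlgebra.mem_supported_compl]
      intro x hx
      rw [coeff_ofMulAction]
      exact hv _ (smul_mem_fixedPoints_of_mem_centralizer (hCR (inv_mem c.2)) hx)) hU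
  have hconst : ∀ x ∈ fixedPoints R X, u.coeff x = u.coeff x₀ := by
    intro x hx
    obtain ⟨c, rfl⟩ := hfix hx
    have := (MonoidAlgebra.mem_supported_compl.mp (huC c⁻¹)) x₀ hx₀
    rwa [MonoidAlgebra.coeff_sub, Finsupp.sub_apply, coeff_ofMulAction, inv_inv, sub_eq_zero]
      at this
  refine ⟨u, hu, fun h ↦ huZ ?_, hconst⟩
  exact MonoidAlgebra.mem_supported_compl.mpr fun x hx ↦ (hconst x hx).trans h

theorem inf_invariants_le_supported_or [IsDomain k] [Finite X] (hR : IsPGroup p R)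
    (hC : IsPGroup p C) (hCR : C ≤ Subgroup.centralizer (R : Set G))
    (hx₀ : x₀ ∈ fixedPoints R X) (hfix : fixedPoints R X ⊆ orbit C x₀)
    {U W : Subrepresentation (ofMulAction k G X)} (hUW : IsCompl U.toSubmodule W.toSubmodule) :
    U.toSubmodule ⊓ (ofMulAction k R X).invariants ≤
        MonoidAlgebra.supported k k (fixedPoints R X)ᶜ ∨
      W.toSubmodule ⊓ (ofMulAction k R X).invariants ≤
        MonoidAlgebra.supported k k (fixedPoints R X)ᶜ := by
  have := Fintype.ofFinite X
  by_contra! ⟨hU, hW⟩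
  obtain ⟨u, ⟨huU, huR⟩, hu0, hu⟩ := exists_mem_invariants_coeff_eq hC hCR hx₀ hfix U hU
  obtain ⟨w, ⟨hwW, hwR⟩, hw0, hw⟩ := exists_mem_invariants_coeff_eq hC hCR hx₀ hfix W hW
  set t := w.coeff x₀ • u - u.coeff x₀ • w
  have htR : t ∈ (ofMulAction k R X).invariants :=
    sub_mem (Submodule.smul_mem _ _ huR) (Submodule.smul_mem _ _ hwR)
  have htZ : t ∈ MonoidAlgebra.supported k k (fixedPoints R X)ᶜ :=
    MonoidAlgebra.mem_supported_compl.mpr fun x hx ↦ by simp [t, hu x hx, hw x hx, mul_comm]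
  have hπt : U.toSubmodule.projection W.toSubmodule hUW t = w.coeff x₀ • u := by
    simp [t, Submodule.projection_apply_of_mem_left hUW huU,
      (Submodule.projection_apply_eq_zero_iff hUW).mpr hwW]
  have := hR.map_mem_supported_compl_fixedPoints
    (fun r ↦ Subrepresentation.commute_projection hUW r) htR htZ
  rw [hπt, MonoidAlgebra.mem_supported_compl] at this
  exact mul_ne_zero hw0 hu0 (by simpa using this x₀ hx₀)

theorem isIndecomposableModule_ofMulAction [IsDomain k] [Finite X] [Nonempty X]
    [IsPretransitive G X] {N : Subgroup G} [N.Normal] (hN : IsPGroup p N) (hRN : R ≤ N)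
    (hC : IsPGroup p C) (hCR : C ≤ Subgroup.centralizer (R : Set G))
    (hx₀ : x₀ ∈ fixedPoints R X) (hfix : fixedPoints R X ⊆ orbit C x₀) :
    IsIndecomposableModule (MonoidAlgebra k G) (ofMulAction k G X).asModule := by
  refine ⟨inferInstanceAs (Nontrivial (MonoidAlgebra k X)), fun U W hUW ↦ ?_⟩
  have eq_bot_of_le : ∀ W' : Submodule (MonoidAlgebra k G) (ofMulAction k G X).asModule,
      (Subrepresentation.ofSubmodule' W').toSubmodule ⊓ (ofMulAction k R X).invariants ≤
        MonoidAlgebra.supported k k (fixedPoints R X)ᶜ → W' = ⊥ := by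
    intro W' h
    by_contra hW'
    obtain ⟨w, hw, hw0⟩ := exists_mem_invariants_coeff_ne_zero hN hRN x₀
      (Subrepresentation.ofSubmodule' W')
      (Submodule.ne_bot_iff _ |>.mpr (Submodule.ne_bot_iff W' |>.mp hW'))
    exact hw0 (MonoidAlgebra.mem_supported_compl.mp (h hw) x₀ hx₀)
  exact (inf_invariants_le_supported_or (hN.to_le hRN) hC hCR hx₀ hfix
    (Subrepresentation.isCompl_ofSubmodule' hUW)).imp (eq_bot_of_le U) (eq_bot_of_le W)

end Representation

section GroupTheory

variable {p : ℕ} {G : Type*} [Group G] {H P N : Subgroup G}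

theorem IsSylowIn.inf_le_of_normal (hsyl : IsSylowIn p H P) (hN : N.Normal)
    (hNp : IsPGroup p N) : N ⊓ H ≤ P := by
  obtain ⟨hPH, hP, hmax⟩ := hsyl
  have hsup : IsPGroup p (P ⊔ N ⊓ H : Subgroup G) := hP.to_sup_of_normal_right'
    (hNp.to_le inf_le_left)
    (hPH.trans (Subgroup.normal_subgroupOf_iff_le_normalizer_inf.mp (hN.subgroupOf H)))
  exact le_sup_right.trans (hmax _ (sup_le hPH inf_le_right) hsup le_sup_left).le

theorem FusionSystemsEq.fixedPoints_subset_orbit_centralizer (hfus : FusionSystemsEq H P)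
    (hN : N.Normal) (hNHP : N ⊓ H ≤ P) :
    fixedPoints (N ⊓ H : Subgroup G) (G ⧸ H) ⊆
      orbit (Subgroup.centralizer ((N ⊓ H : Subgroup G) : Set G)) ((1 : G) : G ⧸ H) := by
  intro ω hω
  obtain ⟨g, rfl⟩ := QuotientGroup.mk_surjective ω
  have hconj : ∀ x ∈ N ⊓ H, g⁻¹ * x * g ∈ N ⊓ H := fun x hx ↦
    ⟨by simpa using hN.conj_mem x hx.1 g⁻¹, by
      have : x • (g : G ⧸ H) = g := hω ⟨x, hx⟩
      rwa [MulAction.Quotient.smul_mk, smul_eq_mul, eq_comm, QuotientGroup.eq,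
        ← mul_assoc] at this⟩
  obtain ⟨h, hh, hgh⟩ := hfus _ hNHP g⁻¹ fun x hx ↦ hNHP (by simpa using hconj x hx)
  refine ⟨⟨g * h, Subgroup.mem_centralizer_iff.mpr fun x hx ↦ ?_⟩, ?_⟩
  · calc x * (g * h) = g * (g⁻¹ * x * g⁻¹⁻¹) * h := by group
      _ = g * h * x := by rw [hgh x hx]; group
  · change (g * h : G) • ((1 : G) : G ⧸ H) = g
    rw [MulAction.Quotient.smul_mk, smul_eq_mul, mul_one, QuotientGroup.eq]
    simpa using hh

end GroupTheory

theorem statement7_general (p : ℕ) [Fact p.Prime] (k : Type*) [Field k] [CharP k p]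
    (G : Type*) [Group G] [Finite G] (H P : Subgroup G)
    (hsyl : IsSylowIn p H P) (hfus : FusionSystemsEq H P)
    (hN : ∃ N : Subgroup G, N.Normal ∧ IsPGroup p N ∧
      IsPGroup p (Subgroup.centralizer ((N ⊓ H : Subgroup G) : Set G))) :
    IsIndecomposableModule (MonoidAlgebra k G) (PermutationModule k G (G ⧸ H)) := by
  obtain ⟨N, hNnorm, hNp, hC⟩ := hN
  have hbase : ((1 : G) : G ⧸ H) ∈ fixedPoints (N ⊓ H : Subgroup G) (G ⧸ H) := fun r ↦ by
    change (r : G) • ((1 : G) : G ⧸ H) = (1 : G)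
    rw [MulAction.Quotient.smul_mk, smul_eq_mul, mul_one, QuotientGroup.eq]
    simpa using r.2.2
  exact Representation.isIndecomposableModule_ofMulAction hNp inf_le_left hC le_rfl hbase
    (hfus.fixedPoints_subset_orbit_centralizer hNnorm (hsyl.inf_le_of_normal hNnorm hNp))

/-- if `F_P(H) = F_P(G)` for a Sylow `p`-subgroup `P` of `H ≤ G` and there
is a normal `p`-subgroup `N ⊴ G` with `C_G(N ∩ H)` a `p`-group, then `k[G/H]` is an
indecomposable `kG`-module. -/
theorem statement7 (p : ℕ) [Fact p.Prime] (k : Type*) [Field k] [IsAlgClosed k] [CharP k p]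
    (G : Type*) [Group G] [Finite G] (H P : Subgroup G)
    (hsyl : IsSylowIn p H P) (hfus : FusionSystemsEq H P)
    (hN : ∃ N : Subgroup G, N.Normal ∧ IsPGroup p N ∧
      IsPGroup p (Subgroup.centralizer ((N ⊓ H : Subgroup G) : Set G))) :
    IsIndecomposableModule (MonoidAlgebra k G) (PermutationModule k G (G ⧸ H)) :=
  statement7_general p k G H P hsyl hfus hN
end

section
/- Let p be a prime and M = Qd(p), with V, α and P = V⟨α⟩ as below. Then the normalizer N_M(P) of P in M equals the set of elements (v, A) of M with v ∈ ℤ/p × ℤ/p and A ∈ SL(2,p) upper triangular, i.e. N_M(P) = V ⋊ { [[r,l],[0,r⁻¹]] : r ∈ (ℤ/p)ˣ, l ∈ ℤ/p }. -/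
/-- `SL(2, p)`. -/
abbrev SL2 (p : ℕ) := Matrix.SpecialLinearGroup (Fin 2) (ZMod p)

/-- The additive automorphism of `ℤ/p × ℤ/p` (as `Fin 2 → ZMod p`) given by a
matrix in `SL(2, p)` acting by matrix–vector multiplication. -/
def sl2AddAut (p : ℕ) (A : SL2 p) : AddAut (Fin 2 → ZMod p) where
  toFun v := (A : Matrix (Fin 2) (Fin 2) (ZMod p)).mulVec v
  invFun v := ((A⁻¹ : SL2 p) : Matrix (Fin 2) (Fin 2) (ZMod p)).mulVec v
  left_inv v := by
    show (_ : Matrix (Fin 2) (Fin 2) (ZMod p)).mulVec (Matrix.mulVec _ v) = v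
    rw [Matrix.mulVec_mulVec, ← Matrix.SpecialLinearGroup.coe_mul, inv_mul_cancel,
      Matrix.SpecialLinearGroup.coe_one, Matrix.one_mulVec]
  right_inv v := by
    show (_ : Matrix (Fin 2) (Fin 2) (ZMod p)).mulVec (Matrix.mulVec _ v) = v
    rw [Matrix.mulVec_mulVec, ← Matrix.SpecialLinearGroup.coe_mul, mul_inv_cancel,
      Matrix.SpecialLinearGroup.coe_one, Matrix.one_mulVec]
  map_add' v w := Matrix.mulVec_add _ v w

/-- The action of `SL(2, p)` on `ℤ/p × ℤ/p` as a homomorphism into the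
(multiplicatively written) automorphism group. -/
def sl2Phi (p : ℕ) : SL2 p →* MulAut (Multiplicative (Fin 2 → ZMod p)) where
  toFun A := AddEquiv.toMultiplicative (sl2AddAut p A)
  map_one' := by
    ext v
    simp [sl2AddAut]
  map_mul' A B := by
    ext v
    simp [sl2AddAut, Matrix.mulVec_mulVec, -Matrix.mulVec_fin_two]

/-- The quadratic group `Qd(p) = (ℤ/p × ℤ/p) ⋊ SL(2, p)`. -/
abbrev Qd (p : ℕ) := SemidirectProduct (Multiplicative (Fin 2 → ZMod p)) (SL2 p) (sl2Phi p)

/-- The normal subgroup `V = ℤ/p × ℤ/p` of `Qd(p)`. -/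
def QdV (p : ℕ) : Subgroup (Qd p) :=
  (SemidirectProduct.inl : Multiplicative (Fin 2 → ZMod p) →* Qd p).range

/-- The unipotent matrix `α = [[1,1],[0,1]] ∈ SL(2,p)`. -/
def alphaSL (p : ℕ) : SL2 p :=
  ⟨!![1, 1; 0, 1], by simp [Matrix.det_fin_two_of]⟩

/-- The element `α` of `Qd(p)`. -/
def Qdalpha (p : ℕ) : Qd p := SemidirectProduct.inr (alphaSL p)

/-- The Sylow `p`-subgroup `P = V⟨α⟩` of `Qd(p)`. -/
def QdP (p : ℕ) : Subgroup (Qd p) := QdV p ⊔ Subgroup.zpowers (Qdalpha p)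

/-- The central element `t = ((1,0), I)` of `P`. -/
def Qdt (p : ℕ) : Qd p := SemidirectProduct.inl (Multiplicative.ofAdd ![1, 0])

/-!
`P` is the preimage, under the projection `Qd(p) → SL(2, p)`, of `⟨α⟩`, which is the group `U` of
upper unitriangular matrices; so `N(P)` is the preimage of the normalizer of `U` in `SL(2, p)`.
Conjugating `α` by `[[a, b], [c, d]]` gives a matrix with lower-left entry `-c²`, so a normalizing
matrix has `c = 0`; conversely, upper triangular matrices normalize `U`.
-/

open Matrix
open scoped MatrixGroups

namespace Matrix.SpecialLinearGroup

variable {R : Type*} [CommRing R]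

lemma det_fin_two_eq_one (A : SL(2, R)) : A 0 0 * A 1 1 - A 0 1 * A 1 0 = 1 :=
  (det_fin_two (A : Matrix (Fin 2) (Fin 2) R)).symm.trans A.det_coe

lemma coe_inv_fin_two (A : SL(2, R)) :
    ((A⁻¹ : SL(2, R)) : Matrix (Fin 2) (Fin 2) R) = !![A 1 1, -A 0 1; -A 1 0, A 0 0] := by
  rw [coe_inv, adjugate_fin_two]

variable (R) in
def upperUnitriangular : Subgroup SL(2, R) where
  carrier := {A | A 1 0 = 0 ∧ A 0 0 = 1 ∧ A 1 1 = 1}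
  one_mem' := by simp
  mul_mem' := by
    rintro A B ⟨hA₁, hA₂, hA₃⟩ ⟨hB₁, hB₂, hB₃⟩
    simp [mul_apply, hA₁, hA₂, hA₃, hB₁, hB₂, hB₃]
  inv_mem' := by
    rintro A ⟨hA₁, hA₂, hA₃⟩
    simp [coe_inv_fin_two, -coe_inv, hA₁, hA₂, hA₃]

lemma mem_upperUnitriangular_iff {A : SL(2, R)} :
    A ∈ upperUnitriangular R ↔ A 1 0 = 0 ∧ A 0 0 = 1 ∧ A 1 1 = 1 := Iff.rfl

lemma conj_mem_upperUnitriangular_iff (A : SL(2, R)) {B : SL(2, R)}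
    (hB : B ∈ upperUnitriangular R) :
    A * B * A⁻¹ ∈ upperUnitriangular R ↔ A 1 0 ^ 2 * B 0 1 = 0 ∧ A 0 0 * A 1 0 * B 0 1 = 0 := by
  obtain ⟨hB₁, hB₂, hB₃⟩ := hB
  have hA := A.det_fin_two_eq_one
  simp only [mem_upperUnitriangular_iff, coe_mul, coe_inv_fin_two, mul_apply, Fin.sum_univ_two,
    of_apply, cons_val', cons_val_zero, cons_val_one, empty_val', cons_val_fin_one, hB₁, hB₂, hB₃]
  constructor
  · rintro ⟨h₁, h₂, -⟩
    exact ⟨by linear_combination -h₁, by linear_combination hA - h₂⟩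
  · rintro ⟨h₁, h₂⟩
    exact ⟨by linear_combination -h₁, by linear_combination hA - h₂, by linear_combination hA + h₂⟩

theorem mem_normalizer_upperUnitriangular_iff [IsReduced R] {A : SL(2, R)} :
    A ∈ Subgroup.normalizer (upperUnitriangular R : Set SL(2, R)) ↔ A 1 0 = 0 := by
  have conj_mem {C B : SL(2, R)} (hC : C 1 0 = 0) (hB : B ∈ upperUnitriangular R) :
      C * B * C⁻¹ ∈ upperUnitriangular R :=
    (conj_mem_upperUnitriangular_iff C hB).2 ⟨by simp [hC], by simp [hC]⟩
  rw [Subgroup.mem_normalizer_iff]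
  constructor
  · intro hA
    let u : SL(2, R) := ⟨!![1, 1; 0, 1], by simp [det_fin_two_of]⟩
    have hu : u ∈ upperUnitriangular R := by
      rw [mem_upperUnitriangular_iff]
      simp [u]
    have hsq : A 1 0 ^ 2 * u 0 1 = 0 :=
      ((conj_mem_upperUnitriangular_iff A hu).1 ((hA u).1 hu)).1
    exact IsNilpotent.eq_zero ⟨2, by simpa [u] using hsq⟩
  · intro hA B
    have hA' : A⁻¹ 1 0 = 0 := by simp [coe_inv_fin_two, -coe_inv, hA]
    refine ⟨conj_mem hA, fun h ↦ ?_⟩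
    simpa [mul_assoc] using conj_mem hA' h

theorem apply_one_zero_eq_zero_iff_exists {A : SL(2, R)} :
    A 1 0 = 0 ↔ ∃ (r : Rˣ) (l : R),
      (A : Matrix (Fin 2) (Fin 2) R) = !![(r : R), l; 0, ((r⁻¹ : Rˣ) : R)] := by
  constructor
  · intro hA
    have hdet : A 0 0 * A 1 1 = 1 := by simpa [hA] using A.det_fin_two_eq_one
    refine ⟨⟨A 0 0, A 1 1, hdet, by rw [mul_comm, hdet]⟩, A 0 1, ?_⟩
    ext i j
    fin_cases i <;> fin_cases j <;> simp [hA]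
  · rintro ⟨r, l, hA⟩
    simp [hA]

end Matrix.SpecialLinearGroup

namespace SemidirectProduct

variable {N G : Type*} [Group N] [Group G] {φ : G →* MulAut N}

theorem range_inl_sup_map_inr (H : Subgroup G) :
    (inl : N →* N ⋊[φ] G).range ⊔ H.map inr = H.comap rightHom := by
  rw [range_inl_eq_ker_rightHom, sup_comm, ← Subgroup.comap_map_eq, Subgroup.map_map,
    rightHom_comp_inr, Subgroup.map_id]

end SemidirectProduct

open Matrix.SpecialLinearGroup

lemma alphaSL_eq_map_T (p : ℕ) : alphaSL p = map (Int.castRingHom (ZMod p)) ModularGroup.T := by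
  ext i j
  fin_cases i <;> fin_cases j <;> simp [alphaSL]

lemma coe_alphaSL_zpow (p : ℕ) (n : ℤ) :
    ((alphaSL p ^ n : SL2 p) : Matrix (Fin 2) (Fin 2) (ZMod p)) = !![1, (n : ZMod p); 0, 1] := by
  rw [alphaSL_eq_map_T, ← map_zpow, map_apply_coe, ModularGroup.coe_T_zpow]
  ext i j
  fin_cases i <;> fin_cases j <;> simp

lemma zpowers_alphaSL (p : ℕ) : Subgroup.zpowers (alphaSL p) = upperUnitriangular (ZMod p) := by
  ext A
  rw [Subgroup.mem_zpowers_iff, mem_upperUnitriangular_iff]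
  constructor
  · rintro ⟨n, rfl⟩
    simp [coe_alphaSL_zpow]
  · rintro ⟨h₁, h₂, h₃⟩
    obtain ⟨n, hn⟩ := ZMod.intCast_surjective (A 0 1)
    refine ⟨n, ?_⟩
    ext i j
    fin_cases i <;> fin_cases j <;> simp [coe_alphaSL_zpow, h₁, h₂, h₃, hn]

lemma QdP_eq_comap_rightHom (p : ℕ) :
    QdP p = (upperUnitriangular (ZMod p)).comap SemidirectProduct.rightHom := by
  rw [QdP, QdV, Qdalpha, ← MonoidHom.map_zpowers, SemidirectProduct.range_inl_sup_map_inr,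
    zpowers_alphaSL]

/-- the normalizer of `P` in `Qd(p)` consists exactly of the elements
`(v, A)` whose matrix part has the form `[[r, l], [0, r⁻¹]]` with `r` a unit. -/
theorem statement10 (p : ℕ) [Fact p.Prime] :
    (Subgroup.normalizer (QdP p : Set (Qd p)) : Set (Qd p)) =
      {x : Qd p | ∃ (r : (ZMod p)ˣ) (l : ZMod p),
        (x.right : Matrix (Fin 2) (Fin 2) (ZMod p)) =
          !![(r : ZMod p), l; 0, ((r⁻¹ : (ZMod p)ˣ) : ZMod p)]} := by
  ext x
  rw [SetLike.mem_coe, QdP_eq_comap_rightHom,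
    ← Subgroup.comap_normalizer_eq_of_surjective _ SemidirectProduct.rightHom_surjective,
    Subgroup.mem_comap, mem_normalizer_upperUnitriangular_iff, apply_one_zero_eq_zero_iff_exists]
  rfl
end

section
/- Let p be an odd prime, M = Qd(p), P = V⟨α⟩ its Sylow p-subgroup as below, G = Park(M,P) Park's group and ι : M → G Park's embedding. Then for every subgroup Q of P of order p², the centralizer C_G(ι(Q)) of ι(Q) in G is a p-group. -/
open Subgroup Matrix

section Park

variable {M : Type*} [Group M] {P Q : Subgroup M}

lemma apply_mul_of_mem_centralizer_map_parkEmbed {f : parkGroup M P}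
    (hf : f ∈ centralizer (Q.map (parkEmbed M P) : Set (parkGroup M P)))
    {q : M} (hq : q ∈ Q) (m : M) :
    (f : Equiv.Perm M) (q * m) = q * (f : Equiv.Perm M) m :=
  (congrArg (fun g : parkGroup M P => (g : Equiv.Perm M) m)
    (mem_centralizer_iff.1 hf _ (mem_map_of_mem _ hq))).symm

lemma pow_apply_of_mem_centralizer_map_parkEmbed {f : parkGroup M P}
    (hf : f ∈ centralizer (Q.map (parkEmbed M P) : Set (parkGroup M P)))
    {q u m : M} (hq : q ∈ Q) (hu : u ∈ P) (hm : (f : Equiv.Perm M) m = q * m * u) (n : ℕ) :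
    ((f : Equiv.Perm M) ^ n) m = q ^ n * m * u ^ n := by
  induction n with
  | zero => simp
  | succ n ih =>
    rw [pow_succ', Equiv.Perm.mul_apply, ih, mul_assoc,
      apply_mul_of_mem_centralizer_map_parkEmbed hf (pow_mem hq n), f.2 _ _ (pow_mem hu n), hm,
      pow_succ, pow_succ']
    simp only [mul_assoc]

theorem isPGroup_centralizer_map_parkEmbed {p k : ℕ} (hexp : ∀ u ∈ P, u ^ p ^ k = 1)
    (hQP : Q ≤ P)
    (hdouble : ∀ m m' : M, (∀ q ∈ Q, ∀ u ∈ P, q * m = m * u → q * m' = m' * u) →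
      ∃ q ∈ Q, ∃ u ∈ P, m' = q * m * u) :
    IsPGroup p (centralizer (Q.map (parkEmbed M P) : Set (parkGroup M P))) := by
  rintro ⟨f, hf⟩
  refine ⟨k, Subtype.ext <| Subtype.ext <| Equiv.ext fun m => ?_⟩
  have hrel : ∀ q ∈ Q, ∀ u ∈ P, q * m = m * u →
      q * (f : Equiv.Perm M) m = (f : Equiv.Perm M) m * u := fun q hq u hu h => by
    rw [← apply_mul_of_mem_centralizer_map_parkEmbed hf hq, h, f.2 m u hu]
  obtain ⟨q, hq, u, hu, hm⟩ := hdouble m _ hrel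
  simp only [SubgroupClass.coe_pow, OneMemClass.coe_one]
  rw [pow_apply_of_mem_centralizer_map_parkEmbed hf hq hu hm, hexp q (hQP hq), hexp u hu,
    one_mul, mul_one, Equiv.Perm.one_apply]

theorem exists_eq_mul_mul_of_centralizer_inf_le {V : Subgroup M} [V.Normal] (hVP : V ≤ P)
    (hC : centralizer ((Q ⊓ V : Subgroup M) : Set M) ≤ Q ⊔ V) (m m' : M)
    (hrel : ∀ q ∈ Q, ∀ u ∈ P, q * m = m * u → q * m' = m' * u) :
    ∃ q ∈ Q, ∃ u ∈ P, m' = q * m * u := by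
  have hc : m' * m⁻¹ ∈ centralizer ((Q ⊓ V : Subgroup M) : Set M) := by
    refine mem_centralizer_iff.2 fun q hq => ?_
    have hconj : m⁻¹ * q * m ∈ V := by simpa using Normal.conj_mem' ‹_› q hq.2 m
    have h := hrel q hq.1 _ (hVP hconj) (by group)
    calc q * (m' * m⁻¹) = m' * (m⁻¹ * q * m) * m⁻¹ := by rw [← mul_assoc, h]
      _ = m' * m⁻¹ * q := by group
  obtain ⟨q, hq, v, hv, hqv⟩ := mem_sup_of_normal_right.1 (hC hc)
  refine ⟨q, hq, m⁻¹ * v * m, hVP (by simpa using Normal.conj_mem' ‹_› v hv m), ?_⟩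
  calc m' = m' * m⁻¹ * m := by group
    _ = q * m * (m⁻¹ * v * m) := by rw [← hqv]; group

end Park

section Unipotent

variable {p : ℕ}

def unip (p : ℕ) (c : ZMod p) : SL2 p :=
  ⟨!![1, c; 0, 1], by simp [Matrix.det_fin_two_of]⟩

@[simp] lemma coe_unip (c : ZMod p) :
    ((unip p c : SL2 p) : Matrix (Fin 2) (Fin 2) (ZMod p)) = !![1, c; 0, 1] := rfl

@[simp] lemma unip_zero : unip p 0 = 1 :=
  Subtype.ext one_fin_two.symm

lemma unip_add (a b : ZMod p) : unip p (a + b) = unip p a * unip p b := by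
  ext i j
  fin_cases i <;> fin_cases j <;> simp [add_comm]

lemma unip_pow (c : ZMod p) (n : ℕ) : unip p c ^ n = unip p (n * c) := by
  induction n with
  | zero => simp
  | succ n ih => rw [pow_succ, ih, ← unip_add]; push_cast; ring_nf

lemma unip_zpow (c : ZMod p) (n : ℤ) : unip p c ^ n = unip p (n * c) := by
  cases n with
  | ofNat n => simpa using unip_pow c n
  | negSucc n =>
    rw [zpow_negSucc, unip_pow, inv_eq_of_mul_eq_one_right (b := unip p (-((n + 1 : ℕ) * c)))]
    · push_cast; ring_nf
    · rw [← unip_add, add_neg_cancel, unip_zero]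

lemma alphaSL_eq_unip : alphaSL p = unip p 1 := rfl

lemma eq_unip_of_mulVec_eq [Fact p.Prime] (A : SL2 p) {d : ZMod p} (hd : d ≠ 0)
    (hA : (A : Matrix (Fin 2) (Fin 2) (ZMod p)) *ᵥ ![d, 0] = ![d, 0]) :
    A = unip p (A 0 1) := by
  have h0 : A 0 0 = 1 := by simpa [mulVec_fin_two, hd] using congrFun hA 0
  have h1 : A 1 0 = 0 := by simpa [mulVec_fin_two, hd] using congrFun hA 1
  have hdet : A 0 0 * A 1 1 - A 0 1 * A 1 0 = 1 := by
    rw [← det_fin_two]; exact A.2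
  have h11 : A 1 1 = 1 := by linear_combination hdet - A 1 1 * h0 + A 0 1 * h1
  ext i j
  fin_cases i <;> fin_cases j <;> simp [h0, h11, h1]

end Unipotent

namespace Qd

open SemidirectProduct

variable {p : ℕ}

def vec (g : Qd p) : Fin 2 → ZMod p := Multiplicative.toAdd g.left

lemma vec_mul (g h : Qd p) :
    vec (g * h) = vec g + (g.right : Matrix (Fin 2) (Fin 2) (ZMod p)) *ᵥ vec h := rfl

lemma ext_vec {g h : Qd p} (hv : vec g = vec h) (hr : g.right = h.right) : g = h :=
  SemidirectProduct.ext hv hr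

lemma mem_QdV_iff {g : Qd p} : g ∈ QdV p ↔ g.right = 1 := by
  rw [QdV, range_inl_eq_ker_rightHom, MonoidHom.mem_ker, rightHom_eq_right]

instance : (QdV p).Normal := by
  rw [QdV, range_inl_eq_ker_rightHom]
  infer_instance

lemma card_QdV [NeZero p] : Nat.card (QdV p) = p ^ 2 := by
  rw [QdV, ← Nat.card_congr (MonoidHom.ofInjective (inl_injective (φ := sl2Phi p))).toEquiv]
  simp [Nat.card_eq_fintype_card, ZMod.card]

lemma exists_right_eq_unip {g : Qd p} (hg : g ∈ QdP p) : ∃ c, g.right = unip p c := by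
  have hle : QdP p ≤ (zpowers (alphaSL p)).comap rightHom :=
    sup_le (fun g hg => by simp [mem_QdV_iff.1 hg])
      (zpowers_le.2 (by simp [Qdalpha]))
  obtain ⟨n, hn⟩ := hle hg
  refine ⟨n, ?_⟩
  rw [← rightHom_eq_right, ← hn]
  simp only [alphaSL_eq_unip, unip_zpow, mul_one]

lemma pow_eq_one_of_mem_QdP {g : Qd p} (hg : g ∈ QdP p) : g ^ p ^ 2 = 1 := by
  obtain ⟨c, hc⟩ := exists_right_eq_unip hg
  have hV : g ^ p ∈ QdV p := by
    rw [mem_QdV_iff, ← rightHom_eq_right, map_pow, rightHom_eq_right, hc, unip_pow]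
    simp
  obtain ⟨v, hv⟩ := hV
  rw [sq, pow_mul, ← hv, ← map_pow]
  have hvp : v ^ p = 1 := by
    ext i
    simp
  rw [hvp, map_one]

@[simp] lemma vec_inl (v : Fin 2 → ZMod p) : vec (inl (Multiplicative.ofAdd v) : Qd p) = v := rfl

lemma right_eq_unip_of_commute [Fact p.Prime] {g : Qd p} {d : ZMod p} (hd : d ≠ 0)
    (h : inl (Multiplicative.ofAdd ![d, 0]) * g = g * inl (Multiplicative.ofAdd ![d, 0])) :
    g.right = unip p (g.right 0 1) := by
  refine eq_unip_of_mulVec_eq _ hd ?_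
  have hv := congrArg vec h
  simp only [vec_mul, vec_inl, right_inl, SL2, Matrix.SpecialLinearGroup.coe_one,
    one_mulVec] at hv
  exact (add_left_cancel ((add_comm _ _).trans hv)).symm

lemma centralizer_QdV_le [Fact p.Prime] : centralizer (QdV p : Set (Qd p)) ≤ QdV p := by
  intro g hg
  have hcomm (v : Fin 2 → ZMod p) :
      inl (Multiplicative.ofAdd v) * g = g * inl (Multiplicative.ofAdd v) :=
    mem_centralizer_iff.1 hg _ ⟨_, rfl⟩
  obtain ⟨s, hs⟩ : ∃ s, g.right = unip p s :=
    ⟨_, right_eq_unip_of_commute one_ne_zero (hcomm ![1, 0])⟩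
  have hs0 : s = 0 := by simpa [vec_mul, hs] using congrFun (congrArg vec (hcomm ![0, 1])) 0
  rw [mem_QdV_iff, hs, hs0, unip_zero]

/-- The quotient map `P → P / Z(P) ≅ (ℤ/p)²`, where `Z(P) = {(x, 0)}`. -/
def modCenter (g : Qd p) : ZMod p × ZMod p := (g.right 0 1, vec g 1)

lemma modCenter_mul {g h : Qd p} (hg : g ∈ QdP p) (hh : h ∈ QdP p) :
    modCenter (g * h) = modCenter g + modCenter h := by
  obtain ⟨a, ha⟩ := exists_right_eq_unip hg
  obtain ⟨b, hb⟩ := exists_right_eq_unip hh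
  simp [modCenter, vec_mul, ha, hb, ← unip_add, vecHead, vecTail]

lemma eq_inl_of_modCenter_eq_zero {g : Qd p} (hg : g ∈ QdP p) (h0 : modCenter g = 0) :
    g = inl (Multiplicative.ofAdd ![vec g 0, 0]) := by
  obtain ⟨a, ha⟩ := exists_right_eq_unip hg
  obtain ⟨rfl, hg1⟩ : a = 0 ∧ vec g 1 = 0 := by simpa [modCenter, ha, Prod.ext_iff] using h0
  refine ext_vec ?_ (by simp [ha])
  ext i
  fin_cases i <;> simp [hg1]

section Prime

variable [Fact p.Prime] {Q : Subgroup (Qd p)}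

lemma exists_inl_mem (hQP : Q ≤ QdP p) (hQ : Nat.card Q = p ^ 2) {b : Qd p} (hbQ : b ∈ Q)
    {c : ZMod p} (hc : c ≠ 0) (hb : b.right = unip p c) :
    ∃ d ≠ 0, inl (Multiplicative.ofAdd ![d, 0]) ∈ Q := by
  -- Otherwise `Q ≅ P / Z(P)`; but a lift `g` of `(0, 1)` does not commute with `b`,
  -- although `b * g` and `g * b` have the same image.
  have hnotinj : ¬ Function.Injective (fun g : Q => modCenter (g : Qd p)) := by
    intro hinj
    obtain ⟨g, hg⟩ := (hinj.bijective_of_nat_card_le (by simp [hQ, ZMod.card, sq])).2 (0, 1)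
    obtain ⟨a, ha⟩ := exists_right_eq_unip (hQP g.2)
    simp only [modCenter, Prod.ext_iff, ha, coe_unip] at hg
    obtain ⟨rfl, hg1⟩ := hg
    have hbg := hinj (a₁ := ⟨b * g, mul_mem hbQ g.2⟩) (a₂ := ⟨g * b, mul_mem g.2 hbQ⟩)
      (by simp only [modCenter_mul (hQP hbQ) (hQP g.2), modCenter_mul (hQP g.2) (hQP hbQ),
        add_comm])
    have h0 : vec b 0 + (vec g 0 + c) = vec g 0 + vec b 0 := by
      simpa [vec_mul, hb, ha, hg1, vecHead, vecTail]
        using congrArg (fun x : Q => vec (x : Qd p) 0) hbg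
    exact hc (by linear_combination h0)
  obtain ⟨g, g', hgg', hne⟩ := Function.not_injective_iff.1 hnotinj
  have hhQ : (g : Qd p)⁻¹ * (g' : Qd p) ∈ Q := mul_mem (inv_mem g.2) g'.2
  have hh0 : modCenter ((g : Qd p)⁻¹ * (g' : Qd p)) = 0 := by
    have := modCenter_mul (hQP g.2) (hQP hhQ)
    rw [mul_inv_cancel_left] at this
    simpa using hgg'.trans this
  have hh := eq_inl_of_modCenter_eq_zero (hQP hhQ) hh0
  refine ⟨_, fun hd => hne (Subtype.ext (inv_mul_eq_one.1 ?_)), hh ▸ hhQ⟩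
  rw [hh, hd]
  exact ext_vec (by ext i; fin_cases i <;> rfl) rfl

lemma mem_sup_QdV_of_right_eq_unip {b : Qd p} (hbQ : b ∈ Q) {c : ZMod p} (hc : c ≠ 0)
    (hb : b.right = unip p c) {g : Qd p} {s : ZMod p} (hg : g.right = unip p s) :
    g ∈ Q ⊔ QdV p := by
  have hbn : (b ^ (s * c⁻¹).val).right = g.right := by
    rw [← rightHom_eq_right, map_pow, rightHom_eq_right, hb, unip_pow, hg, ZMod.natCast_val,
      ZMod.cast_id', id, inv_mul_cancel_right₀ hc]
  have hV : (b ^ (s * c⁻¹).val)⁻¹ * g ∈ QdV p := by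
    rw [mem_QdV_iff, mul_right, inv_right, hbn, inv_mul_cancel]
  simpa using mul_mem_sup (pow_mem hbQ (s * c⁻¹).val) hV

theorem centralizer_inf_QdV_le (hQP : Q ≤ QdP p) (hQ : Nat.card Q = p ^ 2) :
    centralizer ((Q ⊓ QdV p : Subgroup (Qd p)) : Set (Qd p)) ≤ Q ⊔ QdV p := by
  by_cases hQV : Q ≤ QdV p
  · have : Finite (QdV p) :=
      Nat.finite_of_card_ne_zero (by simp [card_QdV, (Fact.out : p.Prime).ne_zero])
    obtain rfl : Q = QdV p := eq_of_le_of_card_ge hQV (by rw [hQ, card_QdV])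
    rw [inf_idem, sup_idem]
    exact centralizer_QdV_le
  obtain ⟨b, hbQ, hbV⟩ := Set.not_subset.1 hQV
  obtain ⟨c, hc⟩ := exists_right_eq_unip (hQP hbQ)
  have hc0 : c ≠ 0 := by
    rintro rfl
    exact hbV (mem_QdV_iff.2 (by simp [hc]))
  obtain ⟨d, hd, hdQ⟩ := exists_inl_mem hQP hQ hbQ hc0 hc
  intro g hg
  exact mem_sup_QdV_of_right_eq_unip hbQ hc0 hc
    (right_eq_unip_of_commute hd (mem_centralizer_iff.1 hg _ ⟨hdQ, _, rfl⟩))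

end Prime

end Qd

theorem statement13_general (p : ℕ) [Fact p.Prime]
    (Q : Subgroup (Qd p)) (hQP : Q ≤ QdP p) (hQcard : Nat.card Q = p ^ 2) :
    IsPGroup p (Subgroup.centralizer
      ((Q.map (parkEmbed (Qd p) (QdP p)) : Subgroup ↥(parkGroup (Qd p) (QdP p))) :
        Set ↥(parkGroup (Qd p) (QdP p)))) :=
  isPGroup_centralizer_map_parkEmbed (fun _ => Qd.pow_eq_one_of_mem_QdP) hQP
    (exists_eq_mul_mul_of_centralizer_inf_le le_sup_left (Qd.centralizer_inf_QdV_le hQP hQcard))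

/-- for an odd prime `p` and any subgroup `Q` of order `p²` of the
Sylow `p`-subgroup `P` of `Qd(p)`, the centralizer of `ι(Q)` in Park's group
`G = Park(Qd(p), P)` is a `p`-group. -/
theorem statement13 (p : ℕ) [Fact p.Prime] (hodd : Odd p)
    (Q : Subgroup (Qd p)) (hQP : Q ≤ QdP p) (hQcard : Nat.card Q = p ^ 2) :
    IsPGroup p (Subgroup.centralizer
      ((Q.map (parkEmbed (Qd p) (QdP p)) : Subgroup ↥(parkGroup (Qd p) (QdP p))) :
        Set ↥(parkGroup (Qd p) (QdP p)))) :=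
  statement13_general p Q hQP hQcard
end

section
/- Let n ≥ 3 be an integer and M a finite group of order 3·2^n such that every normal subgroup of M of odd order is trivial and a Sylow 2-subgroup P of M is not normal in M. Let G = Park(M,P) be Park's group and ι : M → G Park's embedding. Then for every subgroup Q of P that is not contained in the normal core of P in M (equivalently, Q ≰ O_2(M)), the centralizer C_G(ι(Q)) is a 2-group. -/
/-! An element `g` of Park's group permutes the three cosets of `P`. If the induced permutation
has order at most 2, then `g ^ 2` fixes every coset `mP` and acts on it as right multiplication by
`m⁻¹ g² m ∈ P`, so `g` is a `2`-element. Otherwise `g` induces a 3-cycle; each `ι(q)`, `q ∈ Q`,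
commutes with `g` and fixes the coset `P`, hence fixes every coset, which forces `Q ≤ core(P)`. -/

theorem Equiv.Perm.eq_one_of_commute_of_sq_ne_one {α : Type*} (hα : Nat.card α = 3)
    {σ τ : Equiv.Perm α} (hστ : Commute σ τ) (hσ : σ ^ 2 ≠ 1) {x : α} (hx : τ x = x) :
    τ = 1 := by
  have : Finite α := Nat.finite_of_card_ne_zero (by omega)
  -- A permutation of three points with `σ ^ 2 ≠ 1` is a 3-cycle, and `⟨σ⟩` acts regularly.
  have key : ∀ σ τ : Equiv.Perm (Fin 3), ∀ x, σ * τ = τ * σ → σ ^ 2 ≠ 1 → τ x = x → τ = 1 := by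
    decide
  let e := (Finite.equivFinOfCardEq hα).permCongrHom
  rw [← e.map_eq_one_iff]
  refine key (e σ) (e τ) (Finite.equivFinOfCardEq hα x) (hστ.map e).eq
    ((map_pow e σ 2).symm ▸ e.map_ne_one_iff.mpr hσ) ?_
  simp [e, Equiv.permCongrHom_coe, Equiv.permCongr_apply, hx]

theorem Sylow.index_eq_of_card_eq_mul_pow {G : Type*} [Group G] [Finite G] {p : ℕ}
    [Fact p.Prime] (S : Sylow p G) {m n : ℕ} (hG : Nat.card G = m * p ^ n) (hm : ¬ p ∣ m) :
    (S : Subgroup G).index = m := by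
  have hpos : 0 < p ^ n := pow_pos (Fact.out : p.Prime).pos n
  have hS : Nat.card S = p ^ n := by
    rw [S.card_eq_multiplicity, hG, Nat.factorization_mul (by rintro rfl; simp at hm) hpos.ne',
      (Fact.out : p.Prime).factorization_pow]
    simp [Nat.factorization_eq_zero_of_not_dvd hm]
  have := (S : Subgroup G).card_mul_index
  rw [hS, hG, mul_comm m] at this
  exact Nat.eq_of_mul_eq_mul_left hpos this

namespace parkGroup

variable {M : Type*} [Group M] {P : Subgroup M}

theorem apply_mul (g : parkGroup M P) (m : M) {u : M} (hu : u ∈ P) :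
    (g : Equiv.Perm M) (m * u) = (g : Equiv.Perm M) m * u :=
  g.2 m u hu

instance : MulAction (parkGroup M P) (M ⧸ P) where
  smul g := Quotient.map' (g : Equiv.Perm M) fun a b hab => by
    rw [QuotientGroup.leftRel_apply] at hab ⊢
    rw [← mul_inv_cancel_left a b, apply_mul g a hab, inv_mul_cancel_left]
    exact hab
  one_smul := by rintro ⟨m⟩; rfl
  mul_smul _ _ := by rintro ⟨m⟩; rfl

@[simp]
theorem smul_mk (g : parkGroup M P) (m : M) :
    g • (m : M ⧸ P) = ((g : Equiv.Perm M) m : M ⧸ P) :=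
  rfl

theorem toPermHom_comp_parkEmbed :
    (MulAction.toPermHom (parkGroup M P) (M ⧸ P)).comp (parkEmbed M P) =
      MulAction.toPermHom M (M ⧸ P) := by
  ext q ⟨m⟩
  rfl

theorem pow_card_eq_one_of_mem_ker [Finite P] {g : parkGroup M P}
    (hg : g ∈ (MulAction.toPermHom (parkGroup M P) (M ⧸ P)).ker) : g ^ Nat.card P = 1 := by
  ext m
  have hp : m⁻¹ * (g : Equiv.Perm M) m ∈ P :=
    QuotientGroup.eq.mp congr($hg (m : M ⧸ P)).symm
  set p := m⁻¹ * (g : Equiv.Perm M) m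
  have hpow (k : ℕ) : ((g ^ k : parkGroup M P) : Equiv.Perm M) m = m * p ^ k := by
    induction k with
    | zero => simp
    | succ k ih =>
      rw [pow_succ, Subgroup.coe_mul, Equiv.Perm.mul_apply,
        ← mul_inv_cancel_left m ((g : Equiv.Perm M) m), apply_mul _ _ hp, ih, pow_succ, mul_assoc]
  have hp_pow : p ^ Nat.card P = 1 := congrArg Subtype.val (pow_card_eq_one' (x := ⟨p, hp⟩))
  rw [hpow, hp_pow, mul_one]
  rfl

theorem isPGroup_ker {p : ℕ} [Fact p.Prime] [Finite P] (hP : IsPGroup p P) :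
    IsPGroup p (MulAction.toPermHom (parkGroup M P) (M ⧸ P)).ker := by
  obtain ⟨k, hk⟩ := IsPGroup.iff_card.mp hP
  exact fun g => ⟨k, Subtype.ext (hk ▸ pow_card_eq_one_of_mem_ker g.2)⟩

theorem le_normalCore_of_mem_centralizer {Q : Subgroup M}
    (hQP : Q ≤ P) (hindex : Nat.card (M ⧸ P) = 3) {g : parkGroup M P}
    (hg : g ∈ Subgroup.centralizer (Q.map (parkEmbed M P) : Set (parkGroup M P)))
    (hg2 : MulAction.toPermHom (parkGroup M P) (M ⧸ P) g ^ 2 ≠ 1) : Q ≤ P.normalCore := by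
  intro q hq
  rw [Subgroup.normalCore_eq_ker, MonoidHom.mem_ker, ← toPermHom_comp_parkEmbed,
    MonoidHom.comp_apply]
  have hcomm : Commute g (parkEmbed M P q) := (hg _ ⟨q, hq, rfl⟩).symm
  refine Equiv.Perm.eq_one_of_commute_of_sq_ne_one hindex (hcomm.map _) hg2
    (x := ((1 : M) : M ⧸ P)) ?_
  simp only [MulAction.toPermHom_apply, MulAction.toPerm_apply, smul_mk, parkEmbed]
  rw [QuotientGroup.eq]
  simpa using hQP hq

end parkGroup

theorem statement15_general (n : ℕ)
    (M : Type*) [Group M] [Finite M] (hM : Nat.card M = 3 * 2 ^ n)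
    (P : Subgroup M) (hsyl : IsSylowIn 2 ⊤ P)
    (Q : Subgroup M) (hQP : Q ≤ P) (hQ : ¬ Q ≤ P.normalCore) :
    IsPGroup 2 (Subgroup.centralizer
      ((Q.map (parkEmbed M P) : Subgroup ↥(parkGroup M P)) : Set ↥(parkGroup M P))) := by
  obtain ⟨S, hPS⟩ := hsyl.2.1.exists_le_sylow
  have hSP : (S : Subgroup M) = P := hsyl.2.2 S le_top S.isPGroup' hPS
  have hindex : Nat.card (M ⧸ P) = 3 := by
    rw [← Subgroup.index_eq_card, ← hSP]
    exact S.index_eq_of_card_eq_mul_pow hM (by norm_num)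
  intro g
  by_cases hg2 : MulAction.toPermHom (parkGroup M P) (M ⧸ P) g ^ 2 = 1
  · have hg_sq : g.1 ^ 2 ∈ (MulAction.toPermHom (parkGroup M P) (M ⧸ P)).ker := by
      rwa [MonoidHom.mem_ker, map_pow]
    obtain ⟨k, hk⟩ := parkGroup.isPGroup_ker hsyl.2.1 ⟨_, hg_sq⟩
    refine ⟨k + 1, Subtype.ext ?_⟩
    rw [Subgroup.coe_pow, pow_succ', pow_mul]
    exact congrArg Subtype.val hk
  · exact absurd (parkGroup.le_normalCore_of_mem_centralizer hQP hindex g.2 hg2) hQ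

/-- let `M` be a finite group of order `3·2^n` (`n ≥ 3`) with no
non-trivial normal subgroup of odd order and with a non-normal Sylow `2`-subgroup
`P`, and let `G = Park(M, P)` with Park's embedding `ι`.  For every subgroup
`Q ≤ P` not contained in the normal core of `P` in `M` (i.e. `Q ≰ O_2(M)`), the
centralizer `C_G(ι(Q))` is a `2`-group. -/
theorem statement15 (n : ℕ) (hn : 3 ≤ n)
    (M : Type*) [Group M] [Finite M] (hM : Nat.card M = 3 * 2 ^ n)
    (hodd : ∀ K : Subgroup M, K.Normal → Odd (Nat.card K) → K = ⊥)
    (P : Subgroup M) (hsyl : IsSylowIn 2 ⊤ P) (hPnn : ¬ P.Normal)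
    (Q : Subgroup M) (hQP : Q ≤ P) (hQ : ¬ Q ≤ P.normalCore) :
    IsPGroup 2 (Subgroup.centralizer
      ((Q.map (parkEmbed M P) : Subgroup ↥(parkGroup M P)) : Set ↥(parkGroup M P))) :=
  statement15_general n M hM P hsyl Q hQP hQ
end
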